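/- Let μ be a balanced measure on ℝ and N ∈ ℕ. Then: (i) there is a constant C = C(μ,N) with μ({x : M^N f(x) > λ}) ≤ C λ⁻¹ ‖f‖_{L¹(μ)} for all f ∈ L¹(μ) and λ > 0 (weak type (1,1)); (ii) for every 1 < p ≤ ∞ there is a constant C_p = C(μ,N,p) with ‖M^N f‖_{L^p(μ)} ≤ C_p ‖f‖_{L^p(μ)} for all f ∈ L^p(μ). -/

import Mathlib

open MeasureTheory Set
open scoped ENNReal NNReal

noncomputable section

/-- A dyadic interval `[2^(-k) j, 2^(-k) (j+1))`. -/
structure DyadicInterval where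
  k : ℤ
  j : ℤ
deriving DecidableEq

namespace DyadicInterval

/-- The underlying set of a dyadic interval. -/
def toSet (I : DyadicInterval) : Set ℝ :=
  Set.Ico ((2 : ℝ) ^ (-I.k) * (I.j : ℝ)) ((2 : ℝ) ^ (-I.k) * ((I.j : ℝ) + 1))

/-- Left dyadic child. -/
def left (I : DyadicInterval) : DyadicInterval := ⟨I.k + 1, 2 * I.j⟩

/-- Right dyadic child. -/
def right (I : DyadicInterval) : DyadicInterval := ⟨I.k + 1, 2 * I.j + 1⟩

/-- Dyadic parent. -/
def parent (I : DyadicInterval) : DyadicInterval := ⟨I.k - 1, Int.fdiv I.j 2⟩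

/-- Dyadic sibling (the other child of the parent). -/
def sibling (I : DyadicInterval) : DyadicInterval :=
  if 2 ∣ I.j then ⟨I.k, I.j + 1⟩ else ⟨I.k, I.j - 1⟩

/-- `s`-th dyadic ancestor. -/
def ancestor (I : DyadicInterval) : ℕ → DyadicInterval
  | 0 => I
  | n + 1 => (I.ancestor n).parent

end DyadicInterval

open DyadicInterval

/-- Dyadic distance: `min {s+t : I^(s) = J^(t)}`, `∞` if there is no common ancestor. -/
def ddist (I J : DyadicInterval) : ℕ∞ :=
  ⨅ (p : ℕ × ℕ) (_ : I.ancestor p.1 = J.ancestor p.2), ((p.1 + p.2 : ℕ) : ℕ∞)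

/-- `μ(I)` as a real number. -/
def muR (μ : Measure ℝ) (I : DyadicInterval) : ℝ := (μ I.toSet).toReal

/-- `m(I) = μ(I₋) μ(I₊) / μ(I)`. -/
def mBal (μ : Measure ℝ) (I : DyadicInterval) : ℝ :=
  muR μ I.left * muR μ I.right / muR μ I

/-- Average `⟨f⟩_I = μ(I)⁻¹ ∫_I f dμ`. -/
def avg (μ : Measure ℝ) (I : DyadicInterval) (f : ℝ → ℝ) : ℝ :=
  (muR μ I)⁻¹ * ∫ x in I.toSet, f x ∂μ

/-- The Haar function `h_I`. -/
def haarFn (μ : Measure ℝ) (I : DyadicInterval) : ℝ → ℝ := fun x =>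
  Real.sqrt (mBal μ I) *
    (I.left.toSet.indicator (fun _ => (muR μ I.left)⁻¹) x -
      I.right.toSet.indicator (fun _ => (muR μ I.right)⁻¹) x)

/-- Pairing `⟨f,g⟩ = ∫ f g dμ`. -/
def pairing (μ : Measure ℝ) (f g : ℝ → ℝ) : ℝ := ∫ x, f x * g x ∂μ

/-- Standing assumptions: atomless, locally finite Borel measure with `μ(I) > 0`
on all dyadic intervals. -/
def GoodMeasure (μ : Measure ℝ) : Prop :=
  IsLocallyFiniteMeasure μ ∧ NoAtoms μ ∧ ∀ I : DyadicInterval, 0 < μ I.toSet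

/-- Balanced measure: `m(I) ∼ m(Î)` uniformly. -/
def BalancedMeasure (μ : Measure ℝ) : Prop :=
  GoodMeasure μ ∧ ∃ c : ℝ, 1 ≤ c ∧ ∀ I : DyadicInterval,
    c⁻¹ * mBal μ I.parent ≤ mBal μ I ∧ mBal μ I ≤ c * mBal μ I.parent

/-- `η`-sparse family of dyadic intervals. -/
def IsSparse (μ : Measure ℝ) (η : ℝ) (S : Set DyadicInterval) : Prop :=
  ∃ E : DyadicInterval → Set ℝ,
    (∀ I ∈ S, MeasurableSet (E I)) ∧ (∀ I ∈ S, E I ⊆ I.toSet) ∧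
    (∀ I ∈ S, ENNReal.ofReal (η * muR μ I) ≤ μ (E I)) ∧
    S.PairwiseDisjoint E

/-- Classical sparse form `A_S(f₁,f₂)`. -/
def formA (μ : Measure ℝ) (S : Set DyadicInterval) (f₁ f₂ : ℝ → ℝ) : ℝ :=
  ∑' I : S, avg μ I.1 f₁ * avg μ I.1 f₂ * muR μ I.1

/-- Modified sparse form `C_S^N(f₁,f₂)`. -/
def formC (μ : Measure ℝ) (N : ℕ) (S : Set DyadicInterval) (f₁ f₂ : ℝ → ℝ) : ℝ :=
  ∑' q : {q : DyadicInterval × DyadicInterval // q.1 ∈ S ∧ q.2 ∈ S ∧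
      Disjoint q.1.toSet q.2.toSet ∧ (2 : ℕ∞) < ddist q.1 q.2 ∧
      ddist q.1 q.2 ≤ (N : ℕ∞) + 2},
    avg μ q.1.1 f₁ * avg μ q.1.2 f₂ * Real.sqrt (mBal μ q.1.1 * mBal μ q.1.2)

/-- Haar shift of complexity `(s,t)` with coefficients `α`, defined pointwise. -/
def haarShift (μ : Measure ℝ) (s t : ℕ)
    (α : DyadicInterval → DyadicInterval → DyadicInterval → ℝ) (f : ℝ → ℝ) (x : ℝ) : ℝ :=
  ∑' I : DyadicInterval, ∑' J : {J : DyadicInterval // J.ancestor s = I},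
    ∑' K : {K : DyadicInterval // K.ancestor t = I},
      α I J.1 K.1 * pairing μ f (haarFn μ J.1) * haarFn μ K.1 x

/-- The dyadic Hilbert transform. -/
def dyadicHilbert (μ : Measure ℝ) (f : ℝ → ℝ) (x : ℝ) : ℝ :=
  ∑' I : DyadicInterval,
    pairing μ f (haarFn μ I) * (haarFn μ I.left x - haarFn μ I.right x)

/-- Conjugate exponent `p' = p/(p-1)`. -/
def conjExp (p : ℝ) : ℝ := p / (p - 1)

/-- The correction factor `c_p^b(I,J)`. -/
def cpb (μ : Measure ℝ) (p : ℝ) (I J : DyadicInterval) : ℝ :=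
  if I = J then 1
  else mBal μ I ^ (p / 2) * mBal μ J ^ (p / 2) / (muR μ J * muR μ I ^ (p - 1))

/-- The modified maximal operator `M^N`. -/
def maxOp (μ : Measure ℝ) (N : ℕ) (f : ℝ → ℝ) (x : ℝ) : ℝ≥0∞ :=
  ⨆ (q : DyadicInterval × DyadicInterval)
    (_ : ddist q.1 q.2 ≤ (N : ℕ∞) + 2 ∧ x ∈ q.2.toSet),
    ENNReal.ofReal (cpb μ 1 q.1 q.2 * avg μ q.1 fun y => |f y|)

/-- A weight: a.e. positive, locally integrable. -/
def IsWeight (μ : Measure ℝ) (w : ℝ → ℝ) : Prop :=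
  Measurable w ∧ (∀ᵐ x ∂μ, 0 < w x) ∧ LocallyIntegrable w μ

/-- The measure `w dμ`. -/
def wMeasure (μ : Measure ℝ) (w : ℝ → ℝ) : Measure ℝ :=
  μ.withDensity fun x => ENNReal.ofReal (w x)

/-- The quantity `c_p^b(I,J) ⟨w⟩_I ⟨w^{1-p'}⟩_J^{p-1}` (with the `ess sup` convention
for `p = 1`), valued in `ℝ≥0∞`. -/
def ApTerm (μ : Measure ℝ) (p : ℝ) (w : ℝ → ℝ) (I J : DyadicInterval) : ℝ≥0∞ :=
  if p = 1 then
    ENNReal.ofReal (cpb μ 1 I J * avg μ I w) *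
      essSup (fun x => ENNReal.ofReal (w x)⁻¹) (μ.restrict J.toSet)
  else
    ENNReal.ofReal (cpb μ p I J * avg μ I w *
      (avg μ J fun x => w x ^ (1 - conjExp p)) ^ (p - 1))

/-- The classical dyadic `A_p(μ)` characteristic. -/
def ApChar (μ : Measure ℝ) (p : ℝ) (w : ℝ → ℝ) : ℝ≥0∞ :=
  ⨆ I : DyadicInterval,
    ENNReal.ofReal (avg μ I w * (avg μ I fun x => w x ^ (1 - conjExp p)) ^ (p - 1))

/-- The dyadic `A₂(μ)` characteristic. -/
def A2Char (μ : Measure ℝ) (w : ℝ → ℝ) : ℝ≥0∞ :=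
  ⨆ I : DyadicInterval, ENNReal.ofReal (avg μ I w * avg μ I fun x => (w x)⁻¹)

/-- The complexity-`N` characteristic `[w]_{A_p^N(μ)}`. -/
def ApNChar (μ : Measure ℝ) (p : ℝ) (N : ℕ) (w : ℝ → ℝ) : ℝ≥0∞ :=
  ⨆ (q : DyadicInterval × DyadicInterval) (_ : ddist q.1 q.2 ≤ (N : ℕ∞) + 2),
    ApTerm μ p w q.1 q.2

/-- The pairs of intervals relevant for the balanced `A_p` class. -/
def bPair (I J : DyadicInterval) : Prop :=
  J = I ∨ J = I.sibling.left ∨ J = I.sibling.right ∨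
    I = J.sibling.left ∨ I = J.sibling.right

/-- The balanced characteristic `[w]_{A_p^b(μ)}`. -/
def ApbChar (μ : Measure ℝ) (p : ℝ) (w : ℝ → ℝ) : ℝ≥0∞ :=
  ⨆ (q : DyadicInterval × DyadicInterval) (_ : bPair q.1 q.2), ApTerm μ p w q.1 q.2

/-- `L^p` norm (as an element of `ℝ≥0∞`) of an `ℝ≥0∞`-valued function. -/
def lpNormENN (ν : Measure ℝ) (p : ℝ) (g : ℝ → ℝ≥0∞) : ℝ≥0∞ :=
  (∫⁻ x, g x ^ p ∂ν) ^ (1 / p)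


namespace DyadicInterval

instance : Countable DyadicInterval := by
  have h : Function.Injective (fun I : DyadicInterval => (I.k, I.j)) := by
    intro a b hab; cases a; cases b; simpa using hab
  exact h.countable

lemma two_zpow_pos (k : ℤ) : (0:ℝ) < 2 ^ k := zpow_pos (by norm_num) k

lemma mem_toSet_iff {I : DyadicInterval} {x : ℝ} :
    x ∈ I.toSet ↔ (I.j : ℝ) ≤ 2 ^ I.k * x ∧ 2 ^ I.k * x < I.j + 1 := by
  have hc : (0:ℝ) < 2 ^ I.k := two_zpow_pos I.k
  simp only [toSet, Set.mem_Ico, zpow_neg]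
  constructor
  · rintro ⟨h1, h2⟩
    constructor
    · have := mul_le_mul_of_nonneg_left h1 hc.le
      rwa [← mul_assoc, mul_inv_cancel₀ hc.ne', one_mul] at this
    · have := mul_lt_mul_of_pos_left h2 hc
      rwa [← mul_assoc, mul_inv_cancel₀ hc.ne', one_mul] at this
  · rintro ⟨h1, h2⟩
    constructor
    · have := mul_le_mul_of_nonneg_left h1 (inv_pos.mpr hc).le
      rwa [← mul_assoc, inv_mul_cancel₀ hc.ne', one_mul] at this
    · have := mul_lt_mul_of_pos_left h2 (inv_pos.mpr hc)
      rwa [← mul_assoc, inv_mul_cancel₀ hc.ne', one_mul] at this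

lemma left_endpoint_mem (I : DyadicInterval) : (2:ℝ) ^ (-I.k) * I.j ∈ I.toSet := by
  have hc : (0:ℝ) < 2 ^ I.k := two_zpow_pos I.k
  rw [mem_toSet_iff]
  rw [zpow_neg, ← mul_assoc, mul_inv_cancel₀ hc.ne', one_mul]
  constructor <;> simp

lemma toSet_nonempty (I : DyadicInterval) : I.toSet.Nonempty := ⟨_, I.left_endpoint_mem⟩

lemma measurableSet_toSet (I : DyadicInterval) : MeasurableSet I.toSet :=
  measurableSet_Ico

/-- characterization of parent index -/
lemma parent_j_cases (I : DyadicInterval) :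
    I.j = 2 * I.parent.j ∨ I.j = 2 * I.parent.j + 1 := by
  have h2 : (0:ℤ) ≤ 2 := by norm_num
  have hd : I.parent.j = I.j / 2 := Int.fdiv_eq_ediv_of_nonneg I.j h2
  have hmod := Int.emod_two_eq I.j
  have := Int.mul_ediv_add_emod I.j 2
  rcases hmod with h | h
  · left; omega
  · right; omega

lemma parent_k (I : DyadicInterval) : I.parent.k = I.k - 1 := rfl

lemma toSet_subset_parent (I : DyadicInterval) : I.toSet ⊆ I.parent.toSet := by
  intro x hx
  rw [mem_toSet_iff] at hx ⊢
  rw [parent_k]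
  have hsplit : (2:ℝ) ^ (I.k - 1) * x = (2 ^ I.k * x) / 2 := by
    rw [zpow_sub₀ (by norm_num : (2:ℝ) ≠ 0)]
    ring
  rw [hsplit]
  rcases I.parent_j_cases with h | h <;>
  · constructor
    · rw [le_div_iff₀ (by norm_num : (0:ℝ) < 2)]
      push_cast [h] at hx ⊢; nlinarith [hx.1]
    · rw [div_lt_iff₀ (by norm_num : (0:ℝ) < 2)]
      push_cast [h] at hx ⊢; nlinarith [hx.2]

lemma ancestor_k (I : DyadicInterval) (s : ℕ) : (I.ancestor s).k = I.k - s := by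
  induction s with
  | zero => simp [ancestor]
  | succ n ih => simp [ancestor, parent_k, ih]; ring

lemma toSet_subset_ancestor (I : DyadicInterval) (s : ℕ) :
    I.toSet ⊆ (I.ancestor s).toSet := by
  induction s with
  | zero => exact subset_rfl
  | succ n ih => exact ih.trans (toSet_subset_parent _)

lemma toSet_left_subset (I : DyadicInterval) : I.left.toSet ⊆ I.toSet := by
  intro x hx
  rw [mem_toSet_iff] at hx ⊢
  have hsplit : (2:ℝ) ^ (I.k + 1) * x = 2 * (2 ^ I.k * x) := by
    rw [zpow_add₀ (by norm_num : (2:ℝ) ≠ 0)]; ring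
  simp only [left] at hx
  rw [hsplit] at hx
  push_cast at hx ⊢
  constructor <;> nlinarith [hx.1, hx.2]

lemma toSet_right_subset (I : DyadicInterval) : I.right.toSet ⊆ I.toSet := by
  intro x hx
  rw [mem_toSet_iff] at hx ⊢
  have hsplit : (2:ℝ) ^ (I.k + 1) * x = 2 * (2 ^ I.k * x) := by
    rw [zpow_add₀ (by norm_num : (2:ℝ) ≠ 0)]; ring
  simp only [right] at hx
  rw [hsplit] at hx
  push_cast at hx ⊢
  constructor <;> nlinarith [hx.1, hx.2]

/-- nested or disjoint -/
lemma subset_of_mem_of_k_le {I J : DyadicInterval} {x : ℝ} (hk : J.k ≤ I.k)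
    (hxI : x ∈ I.toSet) (hxJ : x ∈ J.toSet) : I.toSet ⊆ J.toSet := by
  rw [mem_toSet_iff] at hxI hxJ
  set d : ℕ := (I.k - J.k).toNat with hd
  have hdk : I.k = J.k + (d : ℤ) := by
    simp only [hd]
    rw [Int.toNat_of_nonneg (by omega)]
    ring
  have hpow : ∀ y : ℝ, (2:ℝ) ^ I.k * y = 2 ^ (d:ℕ) * (2 ^ J.k * y) := by
    intro y
    rw [hdk, zpow_add₀ (by norm_num : (2:ℝ) ≠ 0)]
    rw [zpow_natCast]
    ring
  -- integer inequalities
  have h1 : (J.j * 2 ^ d : ℤ) ≤ I.j := by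
    have : (J.j : ℝ) * 2 ^ d ≤ 2 ^ I.k * x := by
      rw [hpow]
      have := mul_le_mul_of_nonneg_left hxJ.1 (by positivity : (0:ℝ) ≤ 2 ^ (d:ℕ))
      nlinarith [this]
    have h2 : (J.j : ℝ) * 2 ^ d < I.j + 1 := lt_of_le_of_lt this hxI.2
    have : ((J.j * 2 ^ d : ℤ) : ℝ) < ((I.j + 1 : ℤ) : ℝ) := by push_cast; push_cast at h2; linarith
    have := Int.cast_lt.mp this
    omega
  have h2 : (I.j : ℤ) < (J.j + 1) * 2 ^ d := by
    have hlt : (2:ℝ) ^ I.k * x < (J.j + 1) * 2 ^ d := by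
      rw [hpow]
      have := mul_lt_mul_of_pos_left hxJ.2 (by positivity : (0:ℝ) < 2 ^ (d:ℕ))
      nlinarith [this]
    have : ((I.j : ℤ) : ℝ) < (((J.j + 1) * 2 ^ d : ℤ) : ℝ) := by
      push_cast; push_cast at hlt; nlinarith [hxI.1, hlt]
    exact Int.cast_lt.mp this
  -- now prove inclusion
  intro y hy
  rw [mem_toSet_iff] at hy ⊢
  rw [hpow] at hy
  have hp : (0:ℝ) < 2 ^ (d:ℕ) := by positivity
  constructor
  · have : (J.j : ℝ) * 2 ^ d ≤ 2 ^ (d:ℕ) * (2 ^ J.k * y) := by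
      calc (J.j : ℝ) * 2 ^ d ≤ I.j := by exact_mod_cast Int.cast_le.mpr h1
        _ ≤ _ := hy.1
    nlinarith [this]
  · have : 2 ^ (d:ℕ) * ((2:ℝ) ^ J.k * y) < (J.j + 1) * 2 ^ d := by
      calc 2 ^ (d:ℕ) * ((2:ℝ) ^ J.k * y) < I.j + 1 := hy.2
        _ ≤ (J.j + 1) * 2 ^ d := by exact_mod_cast Int.cast_le.mpr h2
    nlinarith [this]

lemma nested_or_disjoint {I J : DyadicInterval} (hk : J.k ≤ I.k) :
    I.toSet ⊆ J.toSet ∨ Disjoint I.toSet J.toSet := by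
  by_cases h : Disjoint I.toSet J.toSet
  · exact Or.inr h
  · left
    rw [Set.not_disjoint_iff] at h
    obtain ⟨x, hxI, hxJ⟩ := h
    exact subset_of_mem_of_k_le hk hxI hxJ

lemma eq_of_same_k_of_mem {I J : DyadicInterval} (hk : I.k = J.k) {x : ℝ}
    (hxI : x ∈ I.toSet) (hxJ : x ∈ J.toSet) : I = J := by
  rw [mem_toSet_iff] at hxI hxJ
  rw [hk] at hxI
  have h1 : (I.j : ℝ) < J.j + 1 := lt_of_le_of_lt hxI.1 hxJ.2
  have h2 : (J.j : ℝ) < I.j + 1 := lt_of_le_of_lt hxJ.1 hxI.2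
  have h1' : I.j < J.j + 1 := by exact_mod_cast h1
  have h2' : J.j < I.j + 1 := by exact_mod_cast h2
  cases I; cases J
  simp_all
  omega

lemma k_le_of_subset {I J : DyadicInterval} (h : I.toSet ⊆ J.toSet) : J.k ≤ I.k := by
  by_contra hk
  push_neg at hk
  have hIk : I.k ≤ J.k := hk.le
  have hx := I.left_endpoint_mem
  have hxJ := h hx
  have hsub : J.toSet ⊆ I.toSet := subset_of_mem_of_k_le hIk hxJ hx
  -- then lengths force J.k ≥ I.k, contradiction via endpoints
  have h1 : I.toSet = J.toSet := Set.Subset.antisymm h hsub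
  -- Ico equal: endpoints equal
  have hIco := h1
  simp only [toSet] at hIco
  have hne : (2:ℝ) ^ (-I.k) * I.j < 2 ^ (-I.k) * (I.j + 1) := by
    have := two_zpow_pos (-I.k); nlinarith
  have hne' : (2:ℝ) ^ (-J.k) * J.j < 2 ^ (-J.k) * (J.j + 1) := by
    have := two_zpow_pos (-J.k); nlinarith
  have hend := (Set.Ico_eq_Ico_iff (Or.inl hne)).mp hIco
  have hlen : (2:ℝ) ^ (-I.k) = 2 ^ (-J.k) := by
    obtain ⟨ha, hb⟩ := hend
    have : (2:ℝ) ^ (-I.k) * (I.j + 1) - 2 ^ (-I.k) * I.j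
        = 2 ^ (-J.k) * (J.j + 1) - 2 ^ (-J.k) * J.j := by rw [ha, hb]
    ring_nf at this ⊢
    linarith
  have : -I.k = -J.k := by
    have h2 : (1:ℝ) < 2 := one_lt_two
    exact zpow_right_injective₀ (by norm_num) (by norm_num) hlen
  omega

lemma ancestor_eq_of_subset {I K : DyadicInterval} (h : I.toSet ⊆ K.toSet) :
    K = I.ancestor (I.k - K.k).toNat := by
  have hk : K.k ≤ I.k := k_le_of_subset h
  set u := (I.k - K.k).toNat with hu
  have hA : (I.ancestor u).k = K.k := by
    rw [ancestor_k]; omega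
  have hx := I.left_endpoint_mem
  exact eq_of_same_k_of_mem hA.symm (h hx) (toSet_subset_ancestor I u hx)

/-- bounds for descendants -/
lemma ancestor_j_bounds (J : DyadicInterval) (t : ℕ) :
    (J.ancestor t).j * 2 ^ t ≤ J.j ∧ J.j < ((J.ancestor t).j + 1) * 2 ^ t := by
  induction t with
  | zero => simp [ancestor]
  | succ n ih =>
    have hA : J.ancestor (n+1) = (J.ancestor n).parent := rfl
    set A := J.ancestor n
    have h2 : (0:ℤ) ≤ 2 ^ n := by positivity
    have hle : 2 * A.parent.j ≤ A.j ∧ A.j + 1 ≤ 2 * A.parent.j + 2 := by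
      rcases A.parent_j_cases with h | h <;> omega
    rw [hA]
    constructor
    · calc A.parent.j * 2 ^ (n+1) = (2 * A.parent.j) * 2 ^ n := by ring
        _ ≤ A.j * 2 ^ n := mul_le_mul_of_nonneg_right hle.1 h2
        _ ≤ J.j := ih.1
    · calc J.j < (A.j + 1) * 2 ^ n := ih.2
        _ ≤ (2 * A.parent.j + 2) * 2 ^ n := mul_le_mul_of_nonneg_right hle.2 h2
        _ = (A.parent.j + 1) * 2 ^ (n+1) := by ring

def descT (K : DyadicInterval) (t : ℕ) : Finset DyadicInterval :=
  (Finset.Ico (K.j * 2 ^ t) ((K.j + 1) * 2 ^ t)).image fun j => ⟨K.k + t, j⟩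

def desc (K : DyadicInterval) (D : ℕ) : Finset DyadicInterval :=
  (Finset.range (D + 1)).biUnion (descT K)

lemma mem_desc {J K : DyadicInterval} {t D : ℕ} (h : J.ancestor t = K) (ht : t ≤ D) :
    J ∈ desc K D := by
  rw [desc, Finset.mem_biUnion]
  refine ⟨t, Finset.mem_range.mpr (by omega), ?_⟩
  rw [descT, Finset.mem_image]
  refine ⟨J.j, ?_, ?_⟩
  · rw [Finset.mem_Ico]
    have := J.ancestor_j_bounds t
    rw [h] at this
    exact ⟨this.1, this.2⟩
  · have hk : J.k = K.k + t := by
      have := J.ancestor_k t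
      rw [h] at this
      omega
    cases J
    simp_all

lemma card_desc_le (K : DyadicInterval) (D : ℕ) : (desc K D).card ≤ (D + 1) * 2 ^ D := by
  calc (desc K D).card ≤ ∑ t ∈ Finset.range (D + 1), (descT K t).card :=
        Finset.card_biUnion_le
    _ ≤ ∑ _t ∈ Finset.range (D + 1), 2 ^ D := by
        apply Finset.sum_le_sum
        intro t ht
        rw [Finset.mem_range] at ht
        calc (descT K t).card ≤ (Finset.Ico (K.j * 2 ^ t) ((K.j + 1) * 2 ^ t)).card :=
              Finset.card_image_le
          _ = ((K.j + 1) * 2 ^ t - K.j * 2 ^ t).toNat := by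
              rw [Int.card_Ico]
          _ = 2 ^ t := by
              have h2 : (K.j + 1) * 2 ^ t - K.j * 2 ^ t = ((2 ^ t : ℕ) : ℤ) := by
                push_cast; ring
              rw [h2, Int.toNat_natCast]
          _ ≤ 2 ^ D := Nat.pow_le_pow_right (by norm_num) (by omega)
    _ = (D + 1) * 2 ^ D := by simp [Finset.sum_const, Finset.card_range]

end DyadicInterval


section MeasureFacts

variable {μ : Measure ℝ} (hμ : BalancedMeasure μ)

lemma muTop_lt_top (hloc : IsLocallyFiniteMeasure μ) (I : DyadicInterval) :
    μ I.toSet < ⊤ := by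
  have hsub : I.toSet ⊆ Set.Icc ((2 : ℝ) ^ (-I.k) * (I.j : ℝ)) ((2 : ℝ) ^ (-I.k) * ((I.j : ℝ) + 1)) :=
    Set.Ico_subset_Icc_self
  exact lt_of_le_of_lt (measure_mono hsub) (isCompact_Icc.measure_lt_top)

include hμ

lemma muR_pos (I : DyadicInterval) : 0 < muR μ I :=
  ENNReal.toReal_pos (hμ.1.2.2 I).ne' (muTop_lt_top hμ.1.1 I).ne

lemma ofReal_muR (I : DyadicInterval) : ENNReal.ofReal (muR μ I) = μ I.toSet :=
  ENNReal.ofReal_toReal (muTop_lt_top hμ.1.1 I).ne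

lemma muR_mono {I J : DyadicInterval} (h : I.toSet ⊆ J.toSet) : muR μ I ≤ muR μ J :=
  ENNReal.toReal_mono (muTop_lt_top hμ.1.1 J).ne (measure_mono h)

lemma mBal_pos (I : DyadicInterval) : 0 < mBal μ I :=
  div_pos (mul_pos (muR_pos hμ I.left) (muR_pos hμ I.right)) (muR_pos hμ I)

lemma mBal_le_muR (I : DyadicInterval) : mBal μ I ≤ muR μ I := by
  rw [mBal, div_le_iff₀ (muR_pos hμ I)]
  have h1 : muR μ I.left ≤ muR μ I := muR_mono hμ I.toSet_left_subset
  have h2 : muR μ I.right ≤ muR μ I := muR_mono hμ I.toSet_right_subset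
  nlinarith [ (muR_pos hμ I.left).le, (muR_pos hμ I.right).le, muR_pos hμ I ]

/-- the balanced constant -/
def balC (hμ : BalancedMeasure μ) : ℝ := hμ.2.choose

lemma one_le_balC : 1 ≤ balC hμ := hμ.2.choose_spec.1

lemma balC_pos : 0 < balC hμ := lt_of_lt_of_le one_pos (one_le_balC hμ)

lemma mBal_parent_le (I : DyadicInterval) : mBal μ I.parent ≤ balC hμ * mBal μ I := by
  have h : (balC hμ)⁻¹ * mBal μ I.parent ≤ mBal μ I := (hμ.2.choose_spec.2 I).1
  have hc := balC_pos hμ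
  rw [inv_mul_le_iff₀ hc] at h
  exact h

lemma mBal_le_parent (I : DyadicInterval) : mBal μ I ≤ balC hμ * mBal μ I.parent :=
  (hμ.2.choose_spec.2 I).2

lemma mBal_ancestor_le_muR (I : DyadicInterval) (s : ℕ) :
    mBal μ (I.ancestor s) ≤ balC hμ ^ s * muR μ I := by
  induction s with
  | zero => simpa [ancestor] using mBal_le_muR hμ I
  | succ n ih =>
    have h1 : mBal μ (I.ancestor (n+1)) ≤ balC hμ * mBal μ (I.ancestor n) :=
      mBal_parent_le hμ (I.ancestor n)
    calc mBal μ (I.ancestor (n+1)) ≤ balC hμ * mBal μ (I.ancestor n) := h1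
      _ ≤ balC hμ * (balC hμ ^ n * muR μ I) := by
          exact mul_le_mul_of_nonneg_left ih (balC_pos hμ).le
      _ = balC hμ ^ (n+1) * muR μ I := by ring

lemma mBal_le_ancestor_pow (I : DyadicInterval) (s : ℕ) :
    mBal μ I ≤ balC hμ ^ s * mBal μ (I.ancestor s) := by
  induction s with
  | zero => simp [ancestor]
  | succ n ih =>
    calc mBal μ I ≤ balC hμ ^ n * mBal μ (I.ancestor n) := ih
      _ ≤ balC hμ ^ n * (balC hμ * mBal μ (I.ancestor (n+1))) := by
          exact mul_le_mul_of_nonneg_left (mBal_le_parent hμ (I.ancestor n))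
            (pow_nonneg (balC_pos hμ).le n)
      _ = balC hμ ^ (n+1) * mBal μ (I.ancestor (n+1)) := by ring

lemma one_le_balC_pow (s : ℕ) : 1 ≤ balC hμ ^ s := one_le_pow₀ (one_le_balC hμ)

lemma balC_pow_le (s t : ℕ) (h : s ≤ t) : balC hμ ^ s ≤ balC hμ ^ t :=
  pow_le_pow_right₀ (one_le_balC hμ) h

end MeasureFacts

section PairBounds

variable {μ : Measure ℝ} (hμ : BalancedMeasure μ)

lemma exists_of_ddist_le {I J : DyadicInterval} {D : ℕ} (h : ddist I J ≤ (D : ℕ∞)) :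
    ∃ s t : ℕ, I.ancestor s = J.ancestor t ∧ s + t ≤ D := by
  by_contra hc
  push_neg at hc
  have hbig : ((D + 1 : ℕ) : ℕ∞) ≤ ddist I J := by
    refine le_iInf fun p => le_iInf fun hp => ?_
    have := hc p.1 p.2 hp
    exact_mod_cast Nat.succ_le_of_lt this
  have : ((D + 1 : ℕ) : ℕ∞) ≤ (D : ℕ∞) := le_trans hbig h
  have : D + 1 ≤ D := by exact_mod_cast this
  omega

include hμ

lemma cpb_mul_le {I J : DyadicInterval} {s t D : ℕ}
    (hst : I.ancestor s = J.ancestor t) (hD : s + t ≤ D) :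
    cpb μ 1 I J ≤ balC hμ ^ (2 * D) ∧
      cpb μ 1 I J * muR μ J ≤ balC hμ ^ (2 * D) * muR μ I := by
  have hc1 := one_le_balC hμ
  have hcp := balC_pos hμ
  by_cases hne : I = J
  · subst hne
    rw [cpb, if_pos rfl]
    constructor
    · exact one_le_balC_pow hμ _
    · rw [one_mul]
      exact le_mul_of_one_le_left (muR_pos hμ I).le (one_le_balC_pow hμ _)
  · have hval : cpb μ 1 I J = Real.sqrt (mBal μ I) * Real.sqrt (mBal μ J) / muR μ J := by
      rw [cpb, if_neg hne]
      norm_num [Real.sqrt_eq_rpow]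
    set K := I.ancestor s with hK
    have h1 : mBal μ I ≤ balC hμ ^ s * mBal μ K := mBal_le_ancestor_pow hμ I s
    have h2 : mBal μ J ≤ balC hμ ^ t * mBal μ K := by
      rw [hst]; exact mBal_le_ancestor_pow hμ J t
    have hKpos : 0 < mBal μ K := mBal_pos hμ K
    have hKI : mBal μ K ≤ balC hμ ^ D * muR μ I := by
      calc mBal μ K ≤ balC hμ ^ s * muR μ I := mBal_ancestor_le_muR hμ I s
        _ ≤ balC hμ ^ D * muR μ I :=
            mul_le_mul_of_nonneg_right (balC_pow_le hμ s D (by omega)) (muR_pos hμ I).le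
    have hKJ : mBal μ K ≤ balC hμ ^ D * muR μ J := by
      rw [hst]
      calc mBal μ (J.ancestor t) ≤ balC hμ ^ t * muR μ J := mBal_ancestor_le_muR hμ J t
        _ ≤ balC hμ ^ D * muR μ J :=
            mul_le_mul_of_nonneg_right (balC_pow_le hμ t D (by omega)) (muR_pos hμ J).le
    have hsqrt : Real.sqrt (mBal μ I) * Real.sqrt (mBal μ J) ≤ balC hμ ^ D * mBal μ K := by
      rw [← Real.sqrt_mul (mBal_pos hμ I).le]
      have hprod : mBal μ I * mBal μ J ≤ (balC hμ ^ D * mBal μ K) ^ 2 := by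
        have hs : balC hμ ^ s * balC hμ ^ t ≤ balC hμ ^ D * balC hμ ^ D := by
          rw [← pow_add]
          calc balC hμ ^ (s + t) ≤ balC hμ ^ D := balC_pow_le hμ _ D hD
            _ ≤ balC hμ ^ D * balC hμ ^ D :=
                le_mul_of_one_le_left (by positivity) (one_le_balC_pow hμ D)
        calc mBal μ I * mBal μ J ≤ (balC hμ ^ s * mBal μ K) * (balC hμ ^ t * mBal μ K) := by
              exact mul_le_mul h1 h2 (mBal_pos hμ J).le (by positivity)
          _ = (balC hμ ^ s * balC hμ ^ t) * (mBal μ K * mBal μ K) := by ring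
          _ ≤ (balC hμ ^ D * balC hμ ^ D) * (mBal μ K * mBal μ K) := by
              exact mul_le_mul_of_nonneg_right hs (by positivity)
          _ = (balC hμ ^ D * mBal μ K) ^ 2 := by ring
      calc Real.sqrt (mBal μ I * mBal μ J) ≤ Real.sqrt ((balC hμ ^ D * mBal μ K) ^ 2) :=
            Real.sqrt_le_sqrt hprod
        _ = balC hμ ^ D * mBal μ K := Real.sqrt_sq (by positivity)
    have hJpos := muR_pos hμ J
    have h2D : balC hμ ^ D * balC hμ ^ D = balC hμ ^ (2 * D) := by
      rw [← pow_add]; congr 1; omega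
    constructor
    · rw [hval, div_le_iff₀ hJpos]
      calc Real.sqrt (mBal μ I) * Real.sqrt (mBal μ J) ≤ balC hμ ^ D * mBal μ K := hsqrt
        _ ≤ balC hμ ^ D * (balC hμ ^ D * muR μ J) :=
            mul_le_mul_of_nonneg_left hKJ (by positivity)
        _ = balC hμ ^ (2 * D) * muR μ J := by rw [← h2D]; ring
    · rw [hval, div_mul_cancel₀ _ hJpos.ne']
      calc Real.sqrt (mBal μ I) * Real.sqrt (mBal μ J) ≤ balC hμ ^ D * mBal μ K := hsqrt
        _ ≤ balC hμ ^ D * (balC hμ ^ D * muR μ I) :=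
            mul_le_mul_of_nonneg_left hKI (by positivity)
        _ = balC hμ ^ (2 * D) * muR μ I := by rw [← h2D]; ring

lemma cpb_nonneg (I J : DyadicInterval) : 0 ≤ cpb μ 1 I J := by
  rw [cpb]
  split
  · norm_num
  · apply div_nonneg
    · apply mul_nonneg <;> exact Real.rpow_nonneg (mBal_pos hμ _).le _
    · apply mul_nonneg (muR_pos hμ _).le (Real.rpow_nonneg (muR_pos hμ _).le _)

end PairBounds

section AvgFacts

variable {μ : Measure ℝ} (hμ : BalancedMeasure μ)

lemma avg_nonneg' {g : ℝ → ℝ} (hg : 0 ≤ g) (I : DyadicInterval) : 0 ≤ avg μ I g := by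
  rw [avg]
  apply mul_nonneg (inv_nonneg.mpr ENNReal.toReal_nonneg)
  exact MeasureTheory.setIntegral_nonneg I.measurableSet_toSet (fun x _ => hg x)

include hμ

lemma avg_mul_muR {g : ℝ → ℝ} (I : DyadicInterval) :
    avg μ I g * muR μ I = ∫ x in I.toSet, g x ∂μ := by
  rw [avg, mul_comm (muR μ I)⁻¹, mul_assoc, inv_mul_cancel₀ (muR_pos hμ I).ne', mul_one]

lemma muR_lt_of_avg {g : ℝ → ℝ} {I : DyadicInterval} {lam : ℝ} (hlam : 0 < lam)
    (h : lam < avg μ I g) : muR μ I < lam⁻¹ * ∫ x in I.toSet, g x ∂μ := by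
  have h0 := muR_pos hμ I
  have hmul : lam * muR μ I < ∫ x in I.toSet, g x ∂μ := by
    have h2 := mul_lt_mul_of_pos_right h h0
    rwa [avg, mul_comm (muR μ I)⁻¹, mul_assoc, inv_mul_cancel₀ h0.ne', mul_one] at h2
  calc muR μ I = lam⁻¹ * (lam * muR μ I) := by field_simp
    _ < lam⁻¹ * ∫ x in I.toSet, g x ∂μ := mul_lt_mul_of_pos_left hmul (inv_pos.mpr hlam)

end AvgFacts

lemma measurable_maxOp (μ : Measure ℝ) (N : ℕ) (f : ℝ → ℝ) : Measurable (maxOp μ N f) := by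
  unfold maxOp
  apply Measurable.iSup
  intro q
  by_cases hd : ddist q.1 q.2 ≤ (N : ℕ∞) + 2
  · have heq : (fun x => ⨆ (_ : ddist q.1 q.2 ≤ (N : ℕ∞) + 2 ∧ x ∈ q.2.toSet),
        ENNReal.ofReal (cpb μ 1 q.1 q.2 * avg μ q.1 fun y => |f y|)) =
        (q.2.toSet.indicator fun _ =>
          ENNReal.ofReal (cpb μ 1 q.1 q.2 * avg μ q.1 fun y => |f y|)) := by
      funext x
      by_cases hx : x ∈ q.2.toSet
      · rw [Set.indicator_of_mem hx]
        exact iSup_pos ⟨hd, hx⟩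
      · rw [Set.indicator_of_notMem hx]
        exact iSup_neg fun hh => hx hh.2
    rw [heq]
    exact Measurable.indicator measurable_const q.2.measurableSet_toSet
  · have heq : (fun x => ⨆ (_ : ddist q.1 q.2 ≤ (N : ℕ∞) + 2 ∧ x ∈ q.2.toSet),
        ENNReal.ofReal (cpb μ 1 q.1 q.2 * avg μ q.1 fun y => |f y|)) = fun _ => 0 := by
      funext x
      exact iSup_neg fun hh => hd hh.1
    rw [heq]
    exact measurable_const

lemma maxOp_congr_ae {μ : Measure ℝ} {N : ℕ} {f g : ℝ → ℝ} (h : f =ᵐ[μ] g) :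
    maxOp μ N f = maxOp μ N g := by
  have havg : ∀ I : DyadicInterval, (avg μ I fun y => |f y|) = avg μ I fun y => |g y| := by
    intro I
    unfold avg
    congr 1
    exact integral_congr_ae (ae_restrict_of_ae (h.mono fun x hx => by simp [hx]))
  funext x
  unfold maxOp
  simp only [havg]

section Covering

open DyadicInterval
open scoped Classical

/-- maximal elements of a finite family of dyadic intervals -/
def maxSub (T : Finset DyadicInterval) : Finset DyadicInterval :=
  T.filter fun J => ∀ J' ∈ T, J.toSet ⊆ J'.toSet → J' = J

lemma maxSub_subset (T : Finset DyadicInterval) : maxSub T ⊆ T := Finset.filter_subset _ _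

lemma exists_maxSub (T : Finset DyadicInterval) {J : DyadicInterval} (hJ : J ∈ T) :
    ∃ J' ∈ maxSub T, J.toSet ⊆ J'.toSet := by
  classical
  classical
  set G := T.filter fun J' => J.toSet ⊆ J'.toSet with hG
  have hGne : G.Nonempty := ⟨J, by simp [hG, hJ]⟩
  obtain ⟨J', hJ'G, hmin⟩ := G.exists_min_image (fun A => A.k) hGne
  rw [hG, Finset.mem_filter] at hJ'G
  refine ⟨J', ?_, hJ'G.2⟩
  rw [maxSub, Finset.mem_filter]
  refine ⟨hJ'G.1, fun J'' hJ'' hsub => ?_⟩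
  have hJG : J'' ∈ G := by
    rw [hG, Finset.mem_filter]
    exact ⟨hJ'', hJ'G.2.trans hsub⟩
  have h1 : J'.k ≤ J''.k := hmin J'' hJG
  have h2 : J''.k ≤ J'.k := k_le_of_subset hsub
  obtain ⟨x, hx⟩ := J'.toSet_nonempty
  exact eq_of_same_k_of_mem (le_antisymm h2 h1) (hsub hx) hx

lemma biUnion_maxSub (T : Finset DyadicInterval) :
    ⋃ J ∈ T, J.toSet = ⋃ J ∈ maxSub T, J.toSet := by
  apply Set.Subset.antisymm
  · intro x hx
    simp only [Set.mem_iUnion] at hx ⊢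
    obtain ⟨J, hJ, hxJ⟩ := hx
    obtain ⟨J', hJ', hsub⟩ := exists_maxSub T hJ
    exact ⟨J', hJ', hsub hxJ⟩
  · exact Set.iUnion₂_mono' fun J hJ => ⟨J, maxSub_subset T hJ, subset_rfl⟩

lemma maxSub_pairwiseDisjoint (T : Finset DyadicInterval) :
    (↑(maxSub T) : Set DyadicInterval).PairwiseDisjoint toSet := by
  intro A hA B hB hne
  rw [Finset.mem_coe, maxSub, Finset.mem_filter] at hA hB
  rcases le_total A.k B.k with hk | hk
  · rcases nested_or_disjoint hk (I := B) (J := A) with hsub | hdis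
    · exact absurd (hB.2 A hA.1 hsub) hne
    · exact hdis.symm
  · rcases nested_or_disjoint hk (I := A) (J := B) with hsub | hdis
    · exact absurd (hA.2 B hB.1 hsub) (Ne.symm hne)
    · exact hdis

lemma measure_biUnion_le_of_finset {μ : Measure ℝ} (S : Set DyadicInterval) (C : ℝ≥0∞)
    (h : ∀ T : Finset DyadicInterval, ↑T ⊆ S → μ (⋃ J ∈ T, J.toSet) ≤ C) :
    μ (⋃ J ∈ S, J.toSet) ≤ C := by
  classical
  have hU : (⋃ J ∈ S, toSet J) = ⋃ F : Finset S, ⋃ J ∈ F, toSet (J : S).1 := by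
    ext x
    simp only [Set.mem_iUnion]
    constructor
    · rintro ⟨J, hJ, hx⟩
      exact ⟨{⟨J, hJ⟩}, ⟨J, hJ⟩, by simp, hx⟩
    · rintro ⟨F, J, _, hx⟩
      exact ⟨J.1, J.2, hx⟩
  rw [hU, Directed.measure_iUnion]
  · apply iSup_le
    intro F
    have heq : (⋃ J ∈ F, toSet (J : S).1) = ⋃ J ∈ F.image (fun A : S => A.1), toSet J := by
      ext x
      simp only [Set.mem_iUnion, Finset.mem_image]
      constructor
      · rintro ⟨J, hJ, hx⟩; exact ⟨J.1, ⟨J, hJ, rfl⟩, hx⟩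
      · rintro ⟨J, ⟨A, hA, rfl⟩, hx⟩; exact ⟨A, hA, hx⟩
    rw [heq]
    apply h
    intro J hJ
    simp only [Finset.coe_image, Set.mem_image] at hJ
    obtain ⟨A, _, rfl⟩ := hJ
    exact A.2
  · intro F G
    refine ⟨F ∪ G, ?_, ?_⟩ <;> intro x hx <;> simp only [Set.mem_iUnion] at hx ⊢ <;>
      obtain ⟨J, hJ, hxJ⟩ := hx
    · exact ⟨J, Finset.mem_union_left _ hJ, hxJ⟩
    · exact ⟨J, Finset.mem_union_right _ hJ, hxJ⟩

end Covering

section Overlap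

open DyadicInterval
open scoped Classical

variable {μ : Measure ℝ}

lemma overlap_card {Ω : Set ℝ} {D : ℕ} (W : Finset DyadicInterval)
    (wI : DyadicInterval → DyadicInterval) (ws wt : DyadicInterval → ℕ)
    (hW : ∀ J ∈ W, ¬ J.toSet ⊆ Ω ∧ (wI J).toSet ⊆ Ω ∧
      (wI J).ancestor (ws J) = J.ancestor (wt J) ∧ ws J + wt J ≤ D)
    (x : ℝ) :
    (W.filter fun J => x ∈ (wI J).toSet).card ≤ D * ((D + 1) * 2 ^ D) := by
  set Φ := W.filter fun J => x ∈ (wI J).toSet with hΦ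
  by_cases hne : Φ.Nonempty
  · obtain ⟨J0, hJ0, hmin⟩ := Φ.exists_min_image (fun J => (wI J).k) hne
    set Istar := wI J0 with hIstar
    have hxI0 : x ∈ Istar.toSet := (Finset.mem_filter.mp hJ0).2
    have hJ0W : J0 ∈ W := (Finset.mem_filter.mp hJ0).1
    have hI0Ω : Istar.toSet ⊆ Ω := (hW J0 hJ0W).2.1
    have hsub : Φ ⊆ (Finset.Icc 1 D).biUnion fun u => desc (Istar.ancestor u) D := by
      intro J hJ
      have hJW : J ∈ W := (Finset.mem_filter.mp hJ).1
      have hxI : x ∈ (wI J).toSet := (Finset.mem_filter.mp hJ).2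
      obtain ⟨hnΩ, hIΩ, hanc, hsumD⟩ := hW J hJW
      have hk0 : Istar.k ≤ (wI J).k := hmin J hJ
      have hIsub : (wI J).toSet ⊆ Istar.toSet := by
        rcases nested_or_disjoint hk0 (I := wI J) (J := Istar) with h | h
        · exact h
        · exact absurd hxI0 (Set.disjoint_left.mp h hxI)
      set K := J.ancestor (wt J) with hKdef
      have hxK : x ∈ K.toSet := by
        rw [← hanc]
        exact toSet_subset_ancestor _ _ hxI
      have hJK : J.toSet ⊆ K.toSet := toSet_subset_ancestor _ _
      have hKnsub : ¬ K.toSet ⊆ Istar.toSet := fun hcon => hnΩ ((hJK.trans hcon).trans hI0Ω)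
      have hIK : Istar.toSet ⊆ K.toSet := by
        rcases le_total K.k Istar.k with hk | hk
        · rcases nested_or_disjoint hk (I := Istar) (J := K) with h | h
          · exact h
          · exact absurd hxK (Set.disjoint_left.mp h hxI0)
        · rcases nested_or_disjoint hk (I := K) (J := Istar) with h | h
          · exact absurd h hKnsub
          · exact absurd hxI0 (Set.disjoint_left.mp h hxK)
      have hKeq : K = Istar.ancestor (Istar.k - K.k).toNat := ancestor_eq_of_subset hIK
      set u := (Istar.k - K.k).toNat with hu
      have hkK : K.k ≤ Istar.k := k_le_of_subset hIK
      have hune : u ≠ 0 := by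
        intro h0
        have hkk : Istar.k = K.k := by omega
        exact hKnsub (le_of_eq (congrArg toSet (eq_of_same_k_of_mem hkk.symm hxK hxI0)))
      have huD : u ≤ D := by
        have h1 : K.k = (wI J).k - ws J := by
          rw [← hanc, ancestor_k]
        have h2 : Istar.k ≤ (wI J).k := hk0
        omega
      refine Finset.mem_biUnion.mpr ⟨u, Finset.mem_Icc.mpr ⟨Nat.one_le_iff_ne_zero.mpr hune, huD⟩,
        mem_desc (t := wt J) (by rw [← hKeq]) (by omega)⟩
    calc Φ.card ≤ ((Finset.Icc 1 D).biUnion fun u => desc (Istar.ancestor u) D).card :=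
          Finset.card_le_card hsub
      _ ≤ ∑ u ∈ Finset.Icc 1 D, (desc (Istar.ancestor u) D).card := Finset.card_biUnion_le
      _ ≤ ∑ _u ∈ Finset.Icc 1 D, (D + 1) * 2 ^ D :=
          Finset.sum_le_sum fun u _ => card_desc_le _ D
      _ = D * ((D + 1) * 2 ^ D) := by simp [Nat.card_Icc, mul_comm]
  · rw [Finset.not_nonempty_iff_eq_empty] at hne
    rw [hne]
    simp

lemma bad_union_bound (hμ : BalancedMeasure μ) {g : ℝ → ℝ} (hg : Integrable g μ)
    (hg0 : ∀ x, 0 ≤ g x) {Ω : Set ℝ} {D : ℕ} {c' : ℝ} (hc' : 0 ≤ c')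
    (Bad : Set DyadicInterval)
    (wI : DyadicInterval → DyadicInterval) (ws wt : DyadicInterval → ℕ)
    (hBad : ∀ J ∈ Bad, ¬ J.toSet ⊆ Ω ∧ (wI J).toSet ⊆ Ω ∧
      (wI J).ancestor (ws J) = J.ancestor (wt J) ∧ ws J + wt J ≤ D ∧
      muR μ J ≤ c' * ∫ x in (wI J).toSet, g x ∂μ) :
    μ (⋃ J ∈ Bad, J.toSet) ≤
      ENNReal.ofReal (((D * ((D + 1) * 2 ^ D) : ℕ) : ℝ) * (c' * ∫ x, g x ∂μ)) := by
  apply measure_biUnion_le_of_finset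
  intro T hT
  rw [biUnion_maxSub]
  set W := maxSub T with hW
  have hWB : ∀ J ∈ W, J ∈ Bad := fun J hJ => hT (maxSub_subset T hJ)
  set Cov := (D * ((D + 1) * 2 ^ D) : ℕ) with hCov
  have hint : ∀ J : DyadicInterval, Integrable ((wI J).toSet.indicator g) μ :=
    fun J => hg.indicator (wI J).measurableSet_toSet
  have key : ∑ J ∈ W, ∫ x in (wI J).toSet, g x ∂μ ≤ (Cov : ℝ) * ∫ x, g x ∂μ := by
    have h1 : ∑ J ∈ W, ∫ x in (wI J).toSet, g x ∂μ
        = ∫ x, (∑ J ∈ W, (wI J).toSet.indicator g x) ∂μ := by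
      rw [integral_finset_sum _ fun J _ => hint J]
      exact Finset.sum_congr rfl fun J _ =>
        (integral_indicator (wI J).measurableSet_toSet).symm
    rw [h1]
    have h2 : ∀ x, (∑ J ∈ W, (wI J).toSet.indicator g x) ≤ (Cov : ℝ) * g x := by
      intro x
      have hcard := overlap_card W wI ws wt
        (fun J hJ => ⟨(hBad J (hWB J hJ)).1, (hBad J (hWB J hJ)).2.1,
          (hBad J (hWB J hJ)).2.2.1, (hBad J (hWB J hJ)).2.2.2.1⟩) x
      calc (∑ J ∈ W, (wI J).toSet.indicator g x)
          = ∑ J ∈ W.filter (fun J => x ∈ (wI J).toSet), g x := by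
            rw [Finset.sum_filter]
            exact Finset.sum_congr rfl fun J _ => by
              by_cases hx : x ∈ (wI J).toSet <;>
                simp [Set.indicator, hx]
        _ = (W.filter (fun J => x ∈ (wI J).toSet)).card * g x := by
            rw [Finset.sum_const, nsmul_eq_mul]
        _ ≤ (Cov : ℝ) * g x := by
            apply mul_le_mul_of_nonneg_right _ (hg0 x)
            exact_mod_cast hcard
    calc ∫ x, (∑ J ∈ W, (wI J).toSet.indicator g x) ∂μ
        ≤ ∫ x, (Cov : ℝ) * g x ∂μ := by
          apply integral_mono (integrable_finset_sum W fun J _ => hint J) (hg.const_mul _) h2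
      _ = (Cov : ℝ) * ∫ x, g x ∂μ := integral_const_mul _ _
  calc μ (⋃ J ∈ W, toSet J) ≤ ∑ J ∈ W, μ (toSet J) := measure_biUnion_finset_le _ _
    _ ≤ ∑ J ∈ W, ENNReal.ofReal (c' * ∫ x in (wI J).toSet, g x ∂μ) := by
        apply Finset.sum_le_sum
        intro J hJ
        rw [← ofReal_muR hμ]
        exact ENNReal.ofReal_le_ofReal (hBad J (hWB J hJ)).2.2.2.2
    _ = ENNReal.ofReal (∑ J ∈ W, c' * ∫ x in (wI J).toSet, g x ∂μ) := by
        rw [ENNReal.ofReal_sum_of_nonneg]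
        intro J hJ
        exact mul_nonneg hc' (setIntegral_nonneg (wI J).measurableSet_toSet fun x _ => hg0 x)
    _ ≤ ENNReal.ofReal ((Cov : ℝ) * (c' * ∫ x, g x ∂μ)) := by
        apply ENNReal.ofReal_le_ofReal
        rw [← Finset.mul_sum]
        calc c' * ∑ J ∈ W, ∫ x in (wI J).toSet, g x ∂μ
            ≤ c' * ((Cov : ℝ) * ∫ x, g x ∂μ) := mul_le_mul_of_nonneg_left key hc'
          _ = (Cov : ℝ) * (c' * ∫ x, g x ∂μ) := by ring

end Overlap

section WeakType

open DyadicInterval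

variable {μ : Measure ℝ}

/-- the weak (1,1) constant -/
def CwReal {μ : Measure ℝ} (hμ : BalancedMeasure μ) (N : ℕ) : ℝ :=
  balC hμ ^ (2 * (N + 2)) * (1 + (((N + 2) * ((N + 2 + 1) * 2 ^ (N + 2)) : ℕ) : ℝ))

lemma one_le_CwReal (hμ : BalancedMeasure μ) (N : ℕ) : 1 ≤ CwReal hμ N := by
  rw [CwReal]
  have h1 : (1:ℝ) ≤ balC hμ ^ (2 * (N + 2)) := one_le_balC_pow hμ _
  have h2 : (1:ℝ) ≤ 1 + (((N + 2) * ((N + 2 + 1) * 2 ^ (N + 2)) : ℕ) : ℝ) := by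
    have : (0:ℝ) ≤ (((N + 2) * ((N + 2 + 1) * 2 ^ (N + 2)) : ℕ) : ℝ) := Nat.cast_nonneg _
    linarith
  nlinarith

lemma CwReal_pos (hμ : BalancedMeasure μ) (N : ℕ) : 0 < CwReal hμ N :=
  lt_of_lt_of_le one_pos (one_le_CwReal hμ N)

theorem weak_type (hμ : BalancedMeasure μ) (N : ℕ) (f : ℝ → ℝ) (hf : Integrable f μ)
    (l : ℝ) (hl : 0 < l) :
    μ {x | ENNReal.ofReal l < maxOp μ N f x} ≤
      ENNReal.ofReal (CwReal hμ N * l⁻¹ * ∫ x, |f x| ∂μ) := by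
  classical
  set D := N + 2 with hD
  set g : ℝ → ℝ := fun x => |f x| with hgdef
  have hg : Integrable g μ := hf.abs
  have hg0 : ∀ x, 0 ≤ g x := fun x => abs_nonneg _
  set B := balC hμ ^ (2 * D) with hB
  have hB1 : (1:ℝ) ≤ B := one_le_balC_pow hμ _
  have hBpos : (0:ℝ) < B := lt_of_lt_of_le one_pos hB1
  set lam' := l / B with hlam'
  have hlam'pos : 0 < lam' := div_pos hl hBpos
  set Q : Set DyadicInterval := {Q' | lam' < avg μ Q' g} with hQdef
  set Ω : Set ℝ := ⋃ J ∈ Q, J.toSet with hΩ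
  have hQsub : ∀ Q' ∈ Q, Q'.toSet ⊆ Ω := fun Q' hQ' => Set.subset_biUnion_of_mem hQ'
  have hsetle : ∀ I : DyadicInterval, ∫ x in I.toSet, g x ∂μ ≤ ∫ x, g x ∂μ := fun I =>
    setIntegral_le_integral hg (Filter.Eventually.of_forall hg0)
  have hSnn : 0 ≤ ∫ x, g x ∂μ := integral_nonneg hg0
  have hQmeas : ∀ Q' ∈ Q, μ Q'.toSet ≤ ENNReal.ofReal (lam'⁻¹ * ∫ x in Q'.toSet, g x ∂μ) := by
    intro Q' hQ'
    rw [← ofReal_muR hμ]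
    exact ENNReal.ofReal_le_ofReal (muR_lt_of_avg hμ hlam'pos hQ').le
  -- Claim 1
  have hμΩ : μ Ω ≤ ENNReal.ofReal (lam'⁻¹ * ∫ x, g x ∂μ) := by
    apply measure_biUnion_le_of_finset
    intro T hT
    rw [biUnion_maxSub]
    have hdisj := maxSub_pairwiseDisjoint T
    calc μ (⋃ J ∈ maxSub T, toSet J) ≤ ∑ J ∈ maxSub T, μ (toSet J) :=
          measure_biUnion_finset_le _ _
      _ ≤ ∑ J ∈ maxSub T, ENNReal.ofReal (lam'⁻¹ * ∫ x in J.toSet, g x ∂μ) :=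
          Finset.sum_le_sum fun J hJ => hQmeas J (hT (maxSub_subset T hJ))
      _ = ENNReal.ofReal (∑ J ∈ maxSub T, lam'⁻¹ * ∫ x in J.toSet, g x ∂μ) := by
          rw [ENNReal.ofReal_sum_of_nonneg]
          intro J hJ
          exact mul_nonneg (inv_nonneg.mpr hlam'pos.le)
            (setIntegral_nonneg J.measurableSet_toSet fun x _ => hg0 x)
      _ ≤ ENNReal.ofReal (lam'⁻¹ * ∫ x, g x ∂μ) := by
          apply ENNReal.ofReal_le_ofReal
          rw [← Finset.mul_sum]
          apply mul_le_mul_of_nonneg_left _ (inv_nonneg.mpr hlam'pos.le)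
          have hsum : ∑ J ∈ maxSub T, ∫ x in J.toSet, g x ∂μ
              = ∫ x in (⋃ J ∈ maxSub T, J.toSet), g x ∂μ :=
            (integral_biUnion_finset (maxSub T) (fun J _ => J.measurableSet_toSet)
              hdisj fun J _ => hg.integrableOn).symm
          rw [hsum]
          exact setIntegral_le_integral hg (Filter.Eventually.of_forall hg0)
  -- the bad family
  set Bad : Set DyadicInterval := {J | ¬ J.toSet ⊆ Ω ∧ ∃ I : DyadicInterval,
    I.toSet ⊆ Ω ∧ ∃ s t : ℕ, I.ancestor s = J.ancestor t ∧ s + t ≤ D ∧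
      muR μ J ≤ (l⁻¹ * B) * ∫ x in I.toSet, g x ∂μ} with hBadDef
  -- main inclusion
  have hincl : {x | ENNReal.ofReal l < maxOp μ N f x} ⊆ Ω ∪ ⋃ J ∈ Bad, J.toSet := by
    intro x hx
    simp only [Set.mem_setOf_eq, maxOp, lt_iSup_iff] at hx
    obtain ⟨q, ⟨hdd, hxJ⟩, hlt⟩ := hx
    set I := q.1 with hI
    set J := q.2 with hJeq
    have havgnn : 0 ≤ avg μ I g := avg_nonneg' hg0 I
    have hlt' : l < cpb μ 1 I J * avg μ I g := by
      by_contra hcon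
      push_neg at hcon
      exact absurd hlt (not_lt.mpr (ENNReal.ofReal_le_ofReal hcon))
    have hdd' : ddist I J ≤ ((D : ℕ) : ℕ∞) := by
      refine le_trans hdd (le_of_eq ?_)
      rw [hD]
      push_cast
      ring
    obtain ⟨s, t, hst, hstD⟩ := exists_of_ddist_le hdd'
    have hcpb := cpb_mul_le hμ hst hstD
    have havgI : lam' < avg μ I g := by
      have h1 : l < B * avg μ I g :=
        lt_of_lt_of_le hlt' (mul_le_mul_of_nonneg_right hcpb.1 havgnn)
      rw [hlam', div_lt_iff₀ hBpos]
      linarith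
    have hIQ : I ∈ Q := havgI
    have hIΩ : I.toSet ⊆ Ω := hQsub I hIQ
    by_cases hJΩ : J.toSet ⊆ Ω
    · exact Or.inl (hJΩ hxJ)
    · refine Or.inr (Set.mem_biUnion ?_ hxJ)
      have hkey : l * muR μ J < B * ∫ x in I.toSet, g x ∂μ := by
        have h2 := mul_lt_mul_of_pos_right hlt' (muR_pos hμ J)
        calc l * muR μ J < cpb μ 1 I J * avg μ I g * muR μ J := h2
          _ = cpb μ 1 I J * muR μ J * avg μ I g := by ring
          _ ≤ B * muR μ I * avg μ I g :=
              mul_le_mul_of_nonneg_right hcpb.2 havgnn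
          _ = B * (avg μ I g * muR μ I) := by ring
          _ = B * ∫ x in I.toSet, g x ∂μ := by rw [avg_mul_muR hμ]
      refine ⟨hJΩ, I, hIΩ, s, t, hst, hstD, ?_⟩
      have hfs : muR μ J = l⁻¹ * (l * muR μ J) := by
        field_simp
      rw [hfs, mul_assoc]
      exact mul_le_mul_of_nonneg_left hkey.le (inv_nonneg.mpr hl.le)
  -- witness functions for Bad
  have hBadW : ∀ J : DyadicInterval, J ∈ Bad → ∃ I : DyadicInterval, ∃ s t : ℕ,
      ¬ J.toSet ⊆ Ω ∧ I.toSet ⊆ Ω ∧ I.ancestor s = J.ancestor t ∧ s + t ≤ D ∧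
        muR μ J ≤ (l⁻¹ * B) * ∫ x in I.toSet, g x ∂μ := by
    rintro J ⟨hn, I, hIΩ, s, t, h1, h2, h3⟩
    exact ⟨I, s, t, hn, hIΩ, h1, h2, h3⟩
  choose! wI ws wt hw using hBadW
  have hμBad : μ (⋃ J ∈ Bad, J.toSet) ≤
      ENNReal.ofReal (((D * ((D + 1) * 2 ^ D) : ℕ) : ℝ) * ((l⁻¹ * B) * ∫ x, g x ∂μ)) := by
    apply bad_union_bound hμ hg hg0 (mul_nonneg (inv_nonneg.mpr hl.le) hBpos.le) Bad wI ws wt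
    intro J hJ
    obtain ⟨h1, h2, h3, h4, h5⟩ := hw J hJ
    exact ⟨h1, h2, h3, h4, h5⟩
  -- assemble
  calc μ {x | ENNReal.ofReal l < maxOp μ N f x} ≤ μ (Ω ∪ ⋃ J ∈ Bad, J.toSet) :=
        measure_mono hincl
    _ ≤ μ Ω + μ (⋃ J ∈ Bad, J.toSet) := measure_union_le _ _
    _ ≤ ENNReal.ofReal (lam'⁻¹ * ∫ x, g x ∂μ) +
        ENNReal.ofReal (((D * ((D + 1) * 2 ^ D) : ℕ) : ℝ) * ((l⁻¹ * B) * ∫ x, g x ∂μ)) :=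
        add_le_add hμΩ hμBad
    _ = ENNReal.ofReal (lam'⁻¹ * ∫ x, g x ∂μ +
        ((D * ((D + 1) * 2 ^ D) : ℕ) : ℝ) * ((l⁻¹ * B) * ∫ x, g x ∂μ)) := by
        rw [ENNReal.ofReal_add]
        · exact mul_nonneg (inv_nonneg.mpr hlam'pos.le) hSnn
        · exact mul_nonneg (Nat.cast_nonneg _)
            (mul_nonneg (mul_nonneg (inv_nonneg.mpr hl.le) hBpos.le) hSnn)
    _ ≤ ENNReal.ofReal (CwReal hμ N * l⁻¹ * ∫ x, |f x| ∂μ) := by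
        apply ENNReal.ofReal_le_ofReal
        have hgf : (∫ x, g x ∂μ) = ∫ x, |f x| ∂μ := rfl
        rw [hgf]
        have hlaminv : lam'⁻¹ = B * l⁻¹ := by
          rw [hlam']
          field_simp
        rw [hlaminv, CwReal]
        have hDD : (1 + (((N + 2) * ((N + 2 + 1) * 2 ^ (N + 2)) : ℕ) : ℝ)) =
            1 + ((D * ((D + 1) * 2 ^ D) : ℕ) : ℝ) := by rw [hD]
        rw [hDD]
        have hInn : 0 ≤ ∫ x, |f x| ∂μ := hSnn
        have hBb : B = balC hμ ^ (2 * D) := hB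
        rw [← hBb]
        ring_nf
        nlinarith [hInn, mul_nonneg (mul_nonneg (Nat.cast_nonneg (D * ((D + 1) * 2 ^ D)) : (0:ℝ) ≤ _) hBpos.le) (mul_nonneg (inv_nonneg.mpr hl.le) hInn)]

end WeakType

section LinfBound

open DyadicInterval

variable {μ : Measure ℝ} (hμ : BalancedMeasure μ)

include hμ

lemma memLp_integrableOn {f : ℝ → ℝ} {p : ℝ≥0∞} (hf : MemLp f p μ) (hp : 1 ≤ p)
    (I : DyadicInterval) : IntegrableOn f I.toSet μ :=
  haveI : Fact (μ I.toSet < ∞) := Fact.mk (muTop_lt_top hμ.1.1 I)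
  (hf.restrict I.toSet).integrable hp

lemma avg_abs_le_of_ae_bound {f : ℝ → ℝ} {K : ℝ} (hK : 0 ≤ K)
    (hae : ∀ᵐ x ∂μ, |f x| ≤ K) (hm : AEStronglyMeasurable f μ) (I : DyadicInterval) :
    (avg μ I fun y => |f y|) ≤ K := by
  haveI : Fact (μ I.toSet < ∞) := Fact.mk (muTop_lt_top hμ.1.1 I)
  have hconst : Integrable (fun _ : ℝ => K) (μ.restrict I.toSet) := integrable_const K
  have hint : IntegrableOn (fun y => |f y|) I.toSet μ := by
    have hmabs : AEStronglyMeasurable (fun y => |f y|) μ := by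
      simpa [Real.norm_eq_abs] using hm.norm
    refine Integrable.mono' hconst hmabs.restrict ?_
    refine ae_restrict_of_ae (hae.mono fun x hx => ?_)
    simpa using hx
  have hle : ∫ x in I.toSet, |f x| ∂μ ≤ K * muR μ I := by
    calc ∫ x in I.toSet, |f x| ∂μ ≤ ∫ _x in I.toSet, K ∂μ :=
          integral_mono_ae hint hconst (ae_restrict_of_ae hae)
      _ = muR μ I * K := by rw [setIntegral_const, smul_eq_mul]; rfl
      _ = K * muR μ I := by ring
  rw [avg]
  have hpos := muR_pos hμ I
  rw [inv_mul_le_iff₀ hpos]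
  linarith [hle]

lemma maxOp_le_const {f : ℝ → ℝ} {K : ℝ} (N : ℕ) (hK : 0 ≤ K)
    (havg : ∀ I : DyadicInterval, (avg μ I fun y => |f y|) ≤ K) (x : ℝ) :
    maxOp μ N f x ≤ ENNReal.ofReal (balC hμ ^ (2 * (N + 2)) * K) := by
  rw [maxOp]
  apply iSup_le
  intro q
  apply iSup_le
  rintro ⟨hdd, hxJ⟩
  have hdd' : ddist q.1 q.2 ≤ ((N + 2 : ℕ) : ℕ∞) := by
    refine le_trans hdd (le_of_eq ?_)
    push_cast
    ring
  obtain ⟨s, t, hst, hstD⟩ := exists_of_ddist_le hdd'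
  have hcpb := (cpb_mul_le hμ hst hstD).1
  apply ENNReal.ofReal_le_ofReal
  have h0 : 0 ≤ avg μ q.1 fun y => |f y| := avg_nonneg' (fun _ => abs_nonneg _) _
  calc cpb μ 1 q.1 q.2 * (avg μ q.1 fun y => |f y|)
      ≤ balC hμ ^ (2 * (N + 2)) * (avg μ q.1 fun y => |f y|) :=
        mul_le_mul_of_nonneg_right hcpb h0
    _ ≤ balC hμ ^ (2 * (N + 2)) * K := by
        apply mul_le_mul_of_nonneg_left (havg q.1) (pow_nonneg (balC_pos hμ).le _)

lemma part_three (N : ℕ) :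
    ∃ C > (0 : ℝ), ∀ f : ℝ → ℝ, MemLp f ⊤ μ →
      essSup (maxOp μ N f) μ ≤ ENNReal.ofReal C * eLpNorm f ⊤ μ := by
  refine ⟨balC hμ ^ (2 * (N + 2)), pow_pos (balC_pos hμ) _, fun f hf => ?_⟩
  set K := (eLpNorm f ⊤ μ).toReal with hKdef
  have htop : eLpNorm f ⊤ μ ≠ ⊤ := hf.2.ne
  have hK : 0 ≤ K := ENNReal.toReal_nonneg
  have hae : ∀ᵐ x ∂μ, |f x| ≤ K := by
    have h1 : ∀ᵐ x ∂μ, ‖f x‖ₑ ≤ eLpNormEssSup f μ := enorm_ae_le_eLpNormEssSup f μ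
    refine h1.mono fun x hx => ?_
    have h2 : (‖f x‖₊ : ℝ≥0∞) ≤ eLpNorm f ⊤ μ := by rwa [eLpNorm_exponent_top]
    have h3 := ENNReal.toReal_mono htop h2
    simpa [Real.norm_eq_abs, hKdef] using h3
  have hbd : ∀ x, maxOp μ N f x ≤ ENNReal.ofReal (balC hμ ^ (2 * (N + 2)) * K) :=
    maxOp_le_const hμ N hK (fun I => avg_abs_le_of_ae_bound hμ hK hae hf.aestronglyMeasurable I)
  calc essSup (maxOp μ N f) μ ≤ ENNReal.ofReal (balC hμ ^ (2 * (N + 2)) * K) :=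
        essSup_le_of_ae_le _ (Filter.Eventually.of_forall hbd)
    _ = ENNReal.ofReal (balC hμ ^ (2 * (N + 2))) * ENNReal.ofReal K :=
        ENNReal.ofReal_mul (pow_nonneg (balC_pos hμ).le _)
    _ ≤ ENNReal.ofReal (balC hμ ^ (2 * (N + 2))) * eLpNorm f ⊤ μ := by
        apply mul_le_mul_right ENNReal.ofReal_toReal_le

end LinfBound

section Split

open DyadicInterval

variable {μ : Measure ℝ} (hμ : BalancedMeasure μ)

include hμ

lemma avg_le_avg_add {u v : ℝ → ℝ} {a : ℝ} (I : DyadicInterval)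
    (hu : IntegrableOn u I.toSet μ) (hv : IntegrableOn v I.toSet μ)
    (hpt : ∀ x, u x ≤ v x + a) : avg μ I u ≤ avg μ I v + a := by
  haveI : Fact (μ I.toSet < ∞) := Fact.mk (muTop_lt_top hμ.1.1 I)
  have hconst : Integrable (fun _ : ℝ => a) (μ.restrict I.toSet) := integrable_const a
  have h1 : ∫ x in I.toSet, u x ∂μ ≤ ∫ x in I.toSet, (v x + a) ∂μ :=
    integral_mono hu (hv.add hconst) hpt
  rw [integral_add hv hconst, setIntegral_const, smul_eq_mul] at h1
  have hpos := muR_pos hμ I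
  rw [avg, avg, inv_mul_le_iff₀ hpos]
  have hμr : μ.real I.toSet = muR μ I := rfl
  rw [hμr] at h1
  calc ∫ x in I.toSet, u x ∂μ ≤ ∫ x in I.toSet, v x ∂μ + muR μ I * a := h1
    _ = ((muR μ I)⁻¹ * ∫ x in I.toSet, v x ∂μ + a) * muR μ I := by
        field_simp
    _ = muR μ I * ((muR μ I)⁻¹ * ∫ x in I.toSet, v x ∂μ + a) := by ring

lemma maxOp_split (N : ℕ) {f f₁ : ℝ → ℝ} {a : ℝ} (ha : 0 ≤ a)
    (hint : ∀ I : DyadicInterval, IntegrableOn (fun y => |f y|) I.toSet μ)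
    (hint1 : Integrable f₁ μ)
    (hpt : ∀ x, |f x| ≤ |f₁ x| + a) (x : ℝ) :
    maxOp μ N f x ≤ maxOp μ N f₁ x + ENNReal.ofReal (balC hμ ^ (2 * (N + 2)) * a) := by
  conv_lhs => rw [maxOp]
  apply iSup_le
  intro q
  apply iSup_le
  rintro ⟨hdd, hxJ⟩
  have hdd' : ddist q.1 q.2 ≤ ((N + 2 : ℕ) : ℕ∞) := by
    refine le_trans hdd (le_of_eq ?_)
    push_cast
    ring
  obtain ⟨s, t, hst, hstD⟩ := exists_of_ddist_le hdd'
  have hcpb := (cpb_mul_le hμ hst hstD).1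
  have hcnn := cpb_nonneg hμ q.1 q.2
  have havg : (avg μ q.1 fun y => |f y|) ≤ (avg μ q.1 fun y => |f₁ y|) + a :=
    avg_le_avg_add hμ q.1 (hint q.1) (hint1.abs.integrableOn) hpt
  have havg1nn : 0 ≤ avg μ q.1 fun y => |f₁ y| := avg_nonneg' (fun _ => abs_nonneg _) _
  have hterm : cpb μ 1 q.1 q.2 * (avg μ q.1 fun y => |f y|) ≤
      cpb μ 1 q.1 q.2 * (avg μ q.1 fun y => |f₁ y|) + balC hμ ^ (2 * (N + 2)) * a := by
    calc cpb μ 1 q.1 q.2 * (avg μ q.1 fun y => |f y|)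
        ≤ cpb μ 1 q.1 q.2 * ((avg μ q.1 fun y => |f₁ y|) + a) :=
          mul_le_mul_of_nonneg_left havg hcnn
      _ = cpb μ 1 q.1 q.2 * (avg μ q.1 fun y => |f₁ y|) + cpb μ 1 q.1 q.2 * a := by ring
      _ ≤ cpb μ 1 q.1 q.2 * (avg μ q.1 fun y => |f₁ y|) + balC hμ ^ (2 * (N + 2)) * a := by
          have := mul_le_mul_of_nonneg_right hcpb ha
          linarith
  calc ENNReal.ofReal (cpb μ 1 q.1 q.2 * avg μ q.1 fun y => |f y|)
      ≤ ENNReal.ofReal (cpb μ 1 q.1 q.2 * (avg μ q.1 fun y => |f₁ y|) +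
          balC hμ ^ (2 * (N + 2)) * a) := ENNReal.ofReal_le_ofReal hterm
    _ ≤ ENNReal.ofReal (cpb μ 1 q.1 q.2 * avg μ q.1 fun y => |f₁ y|) +
          ENNReal.ofReal (balC hμ ^ (2 * (N + 2)) * a) := ENNReal.ofReal_add_le
    _ ≤ maxOp μ N f₁ x + ENNReal.ofReal (balC hμ ^ (2 * (N + 2)) * a) := by
        apply add_le_add_left
        rw [maxOp]
        exact le_iSup_of_le q (le_iSup_of_le ⟨hdd, hxJ⟩ le_rfl)

end Split

section LpBound

open DyadicInterval Filter

variable {μ : Measure ℝ} (hμ : BalancedMeasure μ)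

lemma lint_rpow_Ioo {p : ℝ} (hp : 1 < p) (M : ℝ) (hM : 0 ≤ M) :
    (∫⁻ t in Set.Ioo 0 M, ENNReal.ofReal (t ^ (p - 2))) =
      ENNReal.ofReal (M ^ (p - 1) / (p - 1)) := by
  have hq : (-1 : ℝ) < p - 2 := by linarith
  rcases eq_or_lt_of_le hM with h0 | hMpos
  · rw [← h0, Set.Ioo_self, Measure.restrict_empty, lintegral_zero_measure,
      Real.zero_rpow (by linarith : p - 1 ≠ 0), zero_div, ENNReal.ofReal_zero]
  · have hInt : IntegrableOn (fun t => t ^ (p - 2)) (Set.Ioo 0 M) volume :=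
      ((intervalIntegral.intervalIntegrable_rpow' hq (a := 0) (b := M)).1).mono_set
        Set.Ioo_subset_Ioc_self
    rw [← ofReal_integral_eq_lintegral_ofReal hInt]
    · congr 1
      rw [← integral_Ioc_eq_integral_Ioo, ← intervalIntegral.integral_of_le hMpos.le,
        integral_rpow (Or.inl hq)]
      have he : p - 2 + 1 = p - 1 := by ring
      rw [he, Real.zero_rpow (by linarith : p - 1 ≠ 0), sub_zero]
    · filter_upwards [self_mem_ae_restrict measurableSet_Ioo] with t ht
      exact Real.rpow_nonneg ht.1.le _

include hμ

theorem part_two_meas (N : ℕ) (p : ℝ) (hp : 1 < p) {f : ℝ → ℝ} (hmeas : Measurable f)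
    (hf : MemLp f (ENNReal.ofReal p) μ) :
    lpNormENN μ p (maxOp μ N f) ≤
      ENNReal.ofReal ((p * (2 * CwReal hμ N) *
        ((2 * balC hμ ^ (2 * (N + 2))) ^ (p - 1) / (p - 1))) ^ (1 / p)) *
        eLpNorm f (ENNReal.ofReal p) μ := by
  classical
  haveI : IsLocallyFiniteMeasure μ := hμ.1.1
  have hp0 : (0:ℝ) < p := lt_trans one_pos hp
  have hp1 : (0:ℝ) < p - 1 := by linarith
  have hpne : ENNReal.ofReal p ≠ 0 := by
    simp [ENNReal.ofReal_eq_zero]; linarith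
  have hptop : ENNReal.ofReal p ≠ ⊤ := ENNReal.ofReal_ne_top
  set B := balC hμ ^ (2 * (N + 2)) with hB
  have hB1 : (1:ℝ) ≤ B := one_le_balC_pow hμ _
  have hBpos : (0:ℝ) < B := lt_of_lt_of_le one_pos hB1
  set Cw := CwReal hμ N with hCw
  have hCwpos : 0 < Cw := CwReal_pos hμ N
  set G := maxOp μ N f with hG
  have hGmeas : Measurable G := measurable_maxOp μ N f
  -- |f|^p integrable
  have hfp : Integrable (fun x => |f x| ^ p) μ := by
    have h1 := hf.integrable_norm_rpow hpne hptop
    simpa [Real.norm_eq_abs, ENNReal.toReal_ofReal hp0.le] using h1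
  have hfpnn : ∀ x, 0 ≤ |f x| ^ p := fun x => Real.rpow_nonneg (abs_nonneg _) _
  -- truncation
  set F : ℝ → ℝ → ℝ := fun t x => if t < 2 * B * |f x| then f x else 0 with hF
  have hFabs : ∀ t x, |F t x| = if t < 2 * B * |f x| then |f x| else 0 := by
    intro t x
    rw [hF]
    by_cases h : t < 2 * B * |f x| <;> simp [h]
  have hFmeas : ∀ t, Measurable (F t) := by
    intro t
    apply Measurable.ite _ hmeas measurable_const
    exact measurableSet_lt measurable_const (measurable_const.mul hmeas.abs)
  have hFbound : ∀ t x, 0 < t → |F t x| ≤ (t / (2 * B)) ^ (1 - p) * |f x| ^ p := by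
    intro t x ht
    have hat : 0 < t / (2 * B) := div_pos ht (by linarith)
    rw [hFabs]
    by_cases h : t < 2 * B * |f x|
    · rw [if_pos h]
      have hfx : t / (2 * B) < |f x| := by
        rw [div_lt_iff₀ (by linarith : (0:ℝ) < 2 * B)]
        linarith [h]
      have h2 : |f x| ^ (1 - p) ≤ (t / (2 * B)) ^ (1 - p) :=
        Real.rpow_le_rpow_of_nonpos hat hfx.le (by linarith)
      calc |f x| = |f x| ^ p * |f x| ^ (1 - p) := by
            rw [← Real.rpow_add (lt_trans hat hfx)]
            norm_num
        _ ≤ |f x| ^ p * (t / (2 * B)) ^ (1 - p) :=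
            mul_le_mul_of_nonneg_left h2 (hfpnn x)
        _ = (t / (2 * B)) ^ (1 - p) * |f x| ^ p := by ring
    · rw [if_neg h]
      positivity
  have hFint : ∀ t, 0 < t → Integrable (F t) μ := by
    intro t ht
    apply Integrable.mono' ((hfp.const_mul ((t / (2 * B)) ^ (1 - p))))
      (hFmeas t).aestronglyMeasurable
    refine Eventually.of_forall fun x => ?_
    rw [Real.norm_eq_abs]
    exact hFbound t x ht
  -- H t
  set H : ℝ → ℝ := fun t => ∫ x, |F t x| ∂μ with hH
  have hHnn : ∀ t, 0 ≤ H t := fun t => integral_nonneg fun x => abs_nonneg _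
  -- improved weak bound
  have hweak : ∀ t : ℝ, 0 < t →
      μ {x | ENNReal.ofReal t < G x} ≤ ENNReal.ofReal (Cw * (t / 2)⁻¹ * H t) := by
    intro t ht
    have hsplit : ∀ x, G x ≤ maxOp μ N (F t) x + ENNReal.ofReal (t / 2) := by
      have ha : (0:ℝ) ≤ t / (2 * B) := le_of_lt (div_pos ht (by linarith))
      have hBa : B * (t / (2 * B)) = t / 2 := by
        field_simp
      intro x
      have := maxOp_split hμ N (f := f) (f₁ := F t) ha
        (fun I => memLp_integrableOn hμ hf (ENNReal.one_le_ofReal.mpr hp.le) I |>.abs)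
        (hFint t ht)
        (fun y => ?_) x
      · rwa [← hB, hBa] at this
      · by_cases h : t < 2 * B * |f y|
        · rw [hFabs, if_pos h]
          linarith [div_pos ht (show (0:ℝ) < 2 * B by linarith)]
        · rw [hFabs, if_neg h]
          push_neg at h
          have : |f y| ≤ t / (2 * B) := by
            rw [le_div_iff₀ (by linarith : (0:ℝ) < 2 * B)]
            linarith [h]
          simpa using this
    have hincl : {x | ENNReal.ofReal t < G x} ⊆
        {x | ENNReal.ofReal (t / 2) < maxOp μ N (F t) x} := by
      intro x hx
      simp only [Set.mem_setOf_eq] at hx ⊢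
      by_contra hcon
      push_neg at hcon
      have h1 : G x ≤ ENNReal.ofReal (t / 2) + ENNReal.ofReal (t / 2) :=
        le_trans (hsplit x) (add_le_add_left hcon _)
      rw [← ENNReal.ofReal_add (by linarith) (by linarith)] at h1
      have h2 : t / 2 + t / 2 = t := by ring
      rw [h2] at h1
      exact absurd hx (not_lt.mpr h1)
    calc μ {x | ENNReal.ofReal t < G x} ≤ μ {x | ENNReal.ofReal (t / 2) < maxOp μ N (F t) x} :=
          measure_mono hincl
      _ ≤ ENNReal.ofReal (Cw * (t / 2)⁻¹ * ∫ x, |F t x| ∂μ) :=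
          weak_type hμ N (F t) (hFint t ht) (t / 2) (by linarith)
  -- a.e. finiteness of G
  have hHle : ∀ t, 0 < t → H t ≤ (t / (2 * B)) ^ (1 - p) * ∫ x, |f x| ^ p ∂μ := by
    intro t ht
    rw [hH]
    calc ∫ x, |F t x| ∂μ ≤ ∫ x, (t / (2 * B)) ^ (1 - p) * |f x| ^ p ∂μ :=
          integral_mono (hFint t ht).abs (hfp.const_mul _) (fun x => hFbound t x ht)
      _ = (t / (2 * B)) ^ (1 - p) * ∫ x, |f x| ^ p ∂μ := integral_const_mul _ _
  set Ip := ∫ x, |f x| ^ p ∂μ with hIp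
  have hIpnn : 0 ≤ Ip := integral_nonneg hfpnn
  have hGfin : ∀ᵐ x ∂μ, G x ≠ ⊤ := by
    set c5 := 2 * Cw * (2 * B) ^ (p - 1) * Ip with hc5
    have hc5nn : 0 ≤ c5 := by
      apply mul_nonneg (mul_nonneg (by linarith) _) hIpnn
      exact Real.rpow_nonneg (by linarith) _
    have hbound : ∀ n : ℕ, μ {x | G x = ⊤} ≤ ENNReal.ofReal (c5 * ((n:ℝ) + 1)⁻¹) := by
      intro n
      set t : ℝ := (n:ℝ) + 1 with htdef
      have ht : 0 < t := by positivity
      have ht1 : 1 ≤ t := by simp [htdef]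
      have hsub : {x | G x = ⊤} ⊆ {x | ENNReal.ofReal t < G x} := by
        intro x hx
        simp only [Set.mem_setOf_eq] at hx ⊢
        rw [hx]
        exact ENNReal.ofReal_lt_top
      refine le_trans (measure_mono hsub) (le_trans (hweak t ht) (ENNReal.ofReal_le_ofReal ?_))
      have hstep : Cw * (t / 2)⁻¹ * H t ≤ c5 * t ^ (-p : ℝ) := by
        have h1 : H t ≤ (t / (2 * B)) ^ (1 - p) * Ip := hHle t ht
        have h2 : (t / (2 * B)) ^ (1 - p) = t ^ (1 - p) * (2 * B) ^ (p - 1) := by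
          rw [Real.div_rpow ht.le (by linarith), div_eq_mul_inv,
            ← Real.rpow_neg (by linarith : (0:ℝ) ≤ 2 * B)]
          congr 1
          ring
        have h3 : (t / 2)⁻¹ = 2 * t⁻¹ := by
          field_simp
        have h4 : t⁻¹ * t ^ (1 - p) = t ^ (-p : ℝ) := by
          rw [← Real.rpow_neg_one t, ← Real.rpow_add ht]
          congr 1
          ring
        calc Cw * (t / 2)⁻¹ * H t ≤ Cw * (2 * t⁻¹) * ((t ^ (1 - p) * (2 * B) ^ (p - 1)) * Ip) := by
              rw [h3]
              apply mul_le_mul_of_nonneg_left _ (by positivity)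
              rw [← h2]
              exact h1
          _ = c5 * (t⁻¹ * t ^ (1 - p)) := by rw [hc5]; ring
          _ = c5 * t ^ (-p : ℝ) := by rw [h4]
      refine le_trans hstep ?_
      apply mul_le_mul_of_nonneg_left _ hc5nn
      calc t ^ (-p : ℝ) ≤ t ^ (-1 : ℝ) :=
            Real.rpow_le_rpow_of_exponent_le ht1 (by linarith)
        _ = t⁻¹ := Real.rpow_neg_one t
    have htend : Tendsto (fun n : ℕ => ENNReal.ofReal (c5 * ((n:ℝ) + 1)⁻¹)) atTop (nhds 0) := by
      have h1 : Tendsto (fun n : ℕ => c5 * ((n:ℝ) + 1)⁻¹) atTop (nhds 0) := by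
        have := tendsto_one_div_add_atTop_nhds_zero_nat (𝕜 := ℝ)
        have h2 := this.const_mul c5
        simpa [one_div, mul_comm] using h2
      have := (ENNReal.continuous_ofReal.tendsto 0).comp h1
      rw [ENNReal.ofReal_zero] at this
      exact this
    have hzero : μ {x | G x = ⊤} = 0 :=
      le_antisymm (ge_of_tendsto' htend hbound) zero_le
    rw [ae_iff]
    have hsets : {a | ¬ G a ≠ ⊤} = {x | G x = ⊤} := by ext a; simp
    rw [hsets]
    exact hzero
  -- layer cake
  set Gr : ℝ → ℝ := fun x => (G x).toReal with hGr
  have hGrmeas : Measurable Gr := hGmeas.ennreal_toReal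
  have hGrnn : 0 ≤ Gr := fun x => ENNReal.toReal_nonneg
  have hPcongr : (∫⁻ x, G x ^ p ∂μ) = ∫⁻ x, ENNReal.ofReal (Gr x ^ p) ∂μ := by
    apply lintegral_congr_ae
    filter_upwards [hGfin] with x hx
    rw [hGr, ← ENNReal.ofReal_rpow_of_nonneg ENNReal.toReal_nonneg hp0.le,
      ENNReal.ofReal_toReal hx]
  have hlayer := lintegral_rpow_eq_lintegral_meas_lt_mul μ
    (Eventually.of_forall hGrnn) hGrmeas.aemeasurable hp0
  -- bound the t-integral
  have hmeaslt : ∀ t : ℝ, 0 < t → μ {a | t < Gr a} ≤ ENNReal.ofReal (Cw * (t / 2)⁻¹ * H t) := by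
    intro t ht
    refine le_trans (measure_mono ?_) (hweak t ht)
    intro x hx
    simp only [Set.mem_setOf_eq] at hx ⊢
    have hne : G x ≠ ⊤ := by
      intro hcon
      have h0 : Gr x = 0 := by simp [hGr, hcon]
      rw [h0] at hx
      linarith
    exact (ENNReal.ofReal_lt_iff_lt_toReal ht.le hne).mpr hx
  -- the double integral bound
  set c6 : ℝ := (2 * B) ^ (p - 1) / (p - 1) with hc6
  have hc6nn : 0 ≤ c6 := div_nonneg (Real.rpow_nonneg (by linarith) _) hp1.le
  set Q : ℝ≥0∞ := ∫⁻ x, ENNReal.ofReal (|f x| ^ p) ∂μ with hQ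
  have hofH : ∀ t : ℝ, 0 < t →
      ENNReal.ofReal (H t) = ∫⁻ x, ENNReal.ofReal (|F t x|) ∂μ := fun t ht =>
    ofReal_integral_eq_lintegral_ofReal (hFint t ht).abs
      (Eventually.of_forall fun x => abs_nonneg _)
  have hstep1 : ∀ t : ℝ, 0 < t →
      μ {a | t < Gr a} * ENNReal.ofReal (t ^ (p - 1)) ≤
        ENNReal.ofReal (2 * Cw) *
          (ENNReal.ofReal (t ^ (p - 2)) * ∫⁻ x, ENNReal.ofReal (|F t x|) ∂μ) := by
    intro t ht
    have hreal : Cw * (t / 2)⁻¹ * H t * t ^ (p - 1) =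
        2 * Cw * (t ^ (p - 2) * H t) := by
      have h3 : (t / 2)⁻¹ = 2 * t⁻¹ := by field_simp
      have h4 : t ^ (p - 1) * t⁻¹ = t ^ (p - 2) := by
        rw [← Real.rpow_neg_one t, ← Real.rpow_add ht]
        congr 1
        ring
      calc Cw * (t / 2)⁻¹ * H t * t ^ (p - 1) = 2 * Cw * ((t ^ (p - 1) * t⁻¹) * H t) := by
            rw [h3]; ring
        _ = 2 * Cw * (t ^ (p - 2) * H t) := by rw [h4]
    calc μ {a | t < Gr a} * ENNReal.ofReal (t ^ (p - 1))
        ≤ ENNReal.ofReal (Cw * (t / 2)⁻¹ * H t) * ENNReal.ofReal (t ^ (p - 1)) :=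
          mul_le_mul_left (hmeaslt t ht) _
      _ = ENNReal.ofReal (Cw * (t / 2)⁻¹ * H t * t ^ (p - 1)) :=
          (ENNReal.ofReal_mul (by
            have := hHnn t
            have h2inv : (0:ℝ) ≤ (t / 2)⁻¹ := by positivity
            positivity)).symm
      _ = ENNReal.ofReal (2 * Cw * (t ^ (p - 2) * H t)) := by rw [hreal]
      _ = ENNReal.ofReal (2 * Cw) * (ENNReal.ofReal (t ^ (p - 2)) * ENNReal.ofReal (H t)) := by
          rw [ENNReal.ofReal_mul (by linarith), ENNReal.ofReal_mul (Real.rpow_nonneg ht.le _)]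
      _ = ENNReal.ofReal (2 * Cw) *
          (ENNReal.ofReal (t ^ (p - 2)) * ∫⁻ x, ENNReal.ofReal (|F t x|) ∂μ) := by
          rw [hofH t ht]
  -- measurability of the product kernel
  have hkermeas : Measurable (Function.uncurry fun t x : ℝ =>
      ENNReal.ofReal (t ^ (p - 2)) * ENNReal.ofReal (|F t x|)) := by
    show Measurable (fun q : ℝ × ℝ => ENNReal.ofReal (q.1 ^ (p - 2)) * ENNReal.ofReal (|F q.1 q.2|))
    apply Measurable.fun_mul
    · exact (measurable_fst.pow measurable_const).ennreal_ofReal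
    · have habs : (fun q : ℝ × ℝ => |F q.1 q.2|) =
          fun q : ℝ × ℝ => if q.1 < 2 * B * |f q.2| then |f q.2| else 0 :=
        funext fun q => hFabs q.1 q.2
      have : Measurable fun q : ℝ × ℝ => |F q.1 q.2| := by
        rw [habs]
        exact Measurable.ite
          (measurableSet_lt measurable_fst (measurable_const.mul (hmeas.comp measurable_snd).abs))
          (hmeas.comp measurable_snd).abs measurable_const
      exact this.ennreal_ofReal
  -- the inner t-integral
  have hinner : ∀ x : ℝ,
      (∫⁻ t in Set.Ioi (0:ℝ), ENNReal.ofReal (t ^ (p - 2)) * ENNReal.ofReal (|F t x|)) =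
        ENNReal.ofReal (c6 * |f x| ^ p) := by
    intro x
    set M : ℝ := 2 * B * |f x| with hM
    have hMnn : 0 ≤ M := by positivity
    have hptw : ∀ t : ℝ, ENNReal.ofReal (t ^ (p - 2)) * ENNReal.ofReal (|F t x|) =
        Set.indicator (Set.Iio M) (fun t => ENNReal.ofReal (t ^ (p - 2)) *
          ENNReal.ofReal (|f x|)) t := by
      intro t
      rw [hFabs]
      by_cases h : t < M
      · rw [if_pos (by rw [hM] at h; exact h), Set.indicator_of_mem (Set.mem_Iio.mpr h)]
      · rw [if_neg (by rw [← hM]; exact h), Set.indicator_of_notMem (by simpa using h)]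
        simp
    calc (∫⁻ t in Set.Ioi (0:ℝ), ENNReal.ofReal (t ^ (p - 2)) * ENNReal.ofReal (|F t x|))
        = ∫⁻ t in Set.Ioi (0:ℝ), Set.indicator (Set.Iio M)
            (fun t => ENNReal.ofReal (t ^ (p - 2)) * ENNReal.ofReal (|f x|)) t :=
          lintegral_congr fun t => hptw t
      _ = ∫⁻ t in Set.Iio M ∩ Set.Ioi 0, ENNReal.ofReal (t ^ (p - 2)) *
            ENNReal.ofReal (|f x|) := by
          rw [lintegral_indicator measurableSet_Iio, Measure.restrict_restrict measurableSet_Iio]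
      _ = ∫⁻ t in Set.Ioo 0 M, ENNReal.ofReal (t ^ (p - 2)) * ENNReal.ofReal (|f x|) := by
          rw [Set.Iio_inter_Ioi]
      _ = (∫⁻ t in Set.Ioo 0 M, ENNReal.ofReal (t ^ (p - 2))) * ENNReal.ofReal (|f x|) :=
          lintegral_mul_const' _ _ ENNReal.ofReal_ne_top
      _ = ENNReal.ofReal (M ^ (p - 1) / (p - 1)) * ENNReal.ofReal (|f x|) := by
          rw [lint_rpow_Ioo hp M hMnn]
      _ = ENNReal.ofReal (c6 * |f x| ^ p) := by
          rw [← ENNReal.ofReal_mul (div_nonneg (Real.rpow_nonneg hMnn _) hp1.le)]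
          congr 1
          have hMr : M ^ (p - 1) = (2 * B) ^ (p - 1) * |f x| ^ (p - 1) :=
            Real.mul_rpow (by linarith) (abs_nonneg _)
          rw [hMr, hc6]
          by_cases hfx : |f x| = 0
          · rw [hfx, Real.zero_rpow (by linarith : p - 1 ≠ 0),
              Real.zero_rpow (by linarith : p ≠ 0)]
            ring
          · have h5 : |f x| ^ (p - 1) * |f x| = |f x| ^ p := by
              rw [← Real.rpow_add_one hfx (p - 1)]
              congr 1
              ring
            rw [← h5]
            ring
  -- assemble the double integral
  have hT : (∫⁻ t in Set.Ioi (0:ℝ), μ {a | t < Gr a} * ENNReal.ofReal (t ^ (p - 1))) ≤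
      ENNReal.ofReal (2 * Cw) * (ENNReal.ofReal c6 * Q) := by
    have hmono : (∫⁻ t in Set.Ioi (0:ℝ), μ {a | t < Gr a} * ENNReal.ofReal (t ^ (p - 1))) ≤
        ∫⁻ t in Set.Ioi (0:ℝ), ENNReal.ofReal (2 * Cw) *
          (ENNReal.ofReal (t ^ (p - 2)) * ∫⁻ x, ENNReal.ofReal (|F t x|) ∂μ) := by
      apply lintegral_mono_ae
      filter_upwards [self_mem_ae_restrict measurableSet_Ioi] with t ht
      exact hstep1 t ht
    refine le_trans hmono ?_
    rw [lintegral_const_mul' _ _ ENNReal.ofReal_ne_top]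
    apply mul_le_mul_right
    have hswap : (∫⁻ t in Set.Ioi (0:ℝ), ∫⁻ x, ENNReal.ofReal (t ^ (p - 2)) *
        ENNReal.ofReal (|F t x|) ∂μ) =
        ∫⁻ x, (∫⁻ t in Set.Ioi (0:ℝ), ENNReal.ofReal (t ^ (p - 2)) *
          ENNReal.ofReal (|F t x|)) ∂μ :=
      lintegral_lintegral_swap hkermeas.aemeasurable
    have heq1 : (∫⁻ t in Set.Ioi (0:ℝ), ENNReal.ofReal (t ^ (p - 2)) *
        ∫⁻ x, ENNReal.ofReal (|F t x|) ∂μ) =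
        ∫⁻ t in Set.Ioi (0:ℝ), ∫⁻ x, ENNReal.ofReal (t ^ (p - 2)) *
          ENNReal.ofReal (|F t x|) ∂μ := by
      apply lintegral_congr fun t => ?_
      rw [lintegral_const_mul' _ _ ENNReal.ofReal_ne_top]
    rw [heq1, hswap]
    have heq2 : (∫⁻ x, (∫⁻ t in Set.Ioi (0:ℝ), ENNReal.ofReal (t ^ (p - 2)) *
        ENNReal.ofReal (|F t x|)) ∂μ) = ∫⁻ x, ENNReal.ofReal (c6 * |f x| ^ p) ∂μ :=
      lintegral_congr fun x => hinner x
    rw [heq2]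
    have heq3 : (∫⁻ x, ENNReal.ofReal (c6 * |f x| ^ p) ∂μ) = ENNReal.ofReal c6 * Q := by
      rw [hQ, ← lintegral_const_mul' _ _ ENNReal.ofReal_ne_top]
      exact lintegral_congr fun x => ENNReal.ofReal_mul hc6nn
    rw [heq3]
  -- put everything together
  have hPfin : (∫⁻ x, G x ^ p ∂μ) ≤
      ENNReal.ofReal (p * (2 * Cw) * c6) * Q := by
    rw [hPcongr, hlayer]
    calc ENNReal.ofReal p * (∫⁻ t in Set.Ioi (0:ℝ), μ {a | t < Gr a} *
          ENNReal.ofReal (t ^ (p - 1)))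
        ≤ ENNReal.ofReal p * (ENNReal.ofReal (2 * Cw) * (ENNReal.ofReal c6 * Q)) :=
          mul_le_mul_right hT _
      _ = ENNReal.ofReal (p * (2 * Cw) * c6) * Q := by
          rw [ENNReal.ofReal_mul (by positivity : (0:ℝ) ≤ p * (2 * Cw)),
            ENNReal.ofReal_mul hp0.le]
          ring
  -- final norm computation
  have hQnorm : Q ^ (1 / p) = eLpNorm f (ENNReal.ofReal p) μ := by
    rw [eLpNorm_eq_lintegral_rpow_enorm_toReal hpne hptop, ENNReal.toReal_ofReal hp0.le]
    congr 1
    apply lintegral_congr fun x => ?_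
    rw [← ofReal_norm, Real.norm_eq_abs,
      ENNReal.ofReal_rpow_of_nonneg (abs_nonneg _) hp0.le]
  have hCrealpos : 0 < p * (2 * Cw) * c6 := by
    apply mul_pos (by positivity)
    rw [hc6]
    apply div_pos (Real.rpow_pos_of_pos (by linarith) _) hp1
  rw [lpNormENN]
  calc (∫⁻ x, maxOp μ N f x ^ p ∂μ) ^ (1 / p)
      ≤ (ENNReal.ofReal (p * (2 * Cw) * c6) * Q) ^ (1 / p) :=
        ENNReal.rpow_le_rpow hPfin (by positivity)
    _ = ENNReal.ofReal (p * (2 * Cw) * c6) ^ (1 / p) * Q ^ (1 / p) :=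
        ENNReal.mul_rpow_of_nonneg _ _ (by positivity)
    _ = ENNReal.ofReal ((p * (2 * Cw) * c6) ^ (1 / p)) * eLpNorm f (ENNReal.ofReal p) μ := by
        rw [ENNReal.ofReal_rpow_of_pos hCrealpos, hQnorm]
    _ = ENNReal.ofReal ((p * (2 * CwReal hμ N) *
          ((2 * balC hμ ^ (2 * (N + 2))) ^ (p - 1) / (p - 1))) ^ (1 / p)) *
          eLpNorm f (ENNReal.ofReal p) μ := by rw [← hCw, ← hB, ← hc6]

end LpBound

theorem statement7 (μ : Measure ℝ) (hμ : BalancedMeasure μ) (N : ℕ) :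
    (∃ C > (0 : ℝ), ∀ f : ℝ → ℝ, Integrable f μ → ∀ l : ℝ, 0 < l →
      μ {x | ENNReal.ofReal l < maxOp μ N f x} ≤
        ENNReal.ofReal (C * l⁻¹ * ∫ x, |f x| ∂μ)) ∧
    (∀ p : ℝ, 1 < p → ∃ C > (0 : ℝ), ∀ f : ℝ → ℝ, MemLp f (ENNReal.ofReal p) μ →
      lpNormENN μ p (maxOp μ N f) ≤ ENNReal.ofReal C * eLpNorm f (ENNReal.ofReal p) μ) ∧
    (∃ C > (0 : ℝ), ∀ f : ℝ → ℝ, MemLp f ⊤ μ →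
      essSup (maxOp μ N f) μ ≤ ENNReal.ofReal C * eLpNorm f ⊤ μ) := by
  refine ⟨⟨CwReal hμ N, CwReal_pos hμ N, fun f hf l hl => weak_type hμ N f hf l hl⟩, ?_,
    part_three hμ N⟩
  intro p hp
  have hp1 : (0:ℝ) < p - 1 := by linarith
  have hCwpos := CwReal_pos hμ N
  have hBpos : (0:ℝ) < balC hμ ^ (2 * (N + 2)) := pow_pos (balC_pos hμ) _
  have hcpos : 0 < p * (2 * CwReal hμ N) *
      ((2 * balC hμ ^ (2 * (N + 2))) ^ (p - 1) / (p - 1)) := by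
    apply mul_pos (by positivity)
    exact div_pos (Real.rpow_pos_of_pos (by linarith) _) hp1
  refine ⟨(p * (2 * CwReal hμ N) *
      ((2 * balC hμ ^ (2 * (N + 2))) ^ (p - 1) / (p - 1))) ^ (1 / p),
    Real.rpow_pos_of_pos hcpos _, fun f hf => ?_⟩
  have hsm := hf.aestronglyMeasurable
  have hff' : f =ᵐ[μ] hsm.mk f := hsm.ae_eq_mk
  have hmeas' : Measurable (hsm.mk f) := hsm.stronglyMeasurable_mk.measurable
  have hf'Lp : MemLp (hsm.mk f) (ENNReal.ofReal p) μ := hf.ae_eq hff'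
  have hmax : maxOp μ N f = maxOp μ N (hsm.mk f) := maxOp_congr_ae hff'
  rw [hmax, eLpNorm_congr_ae hff']
  exact part_two_meas hμ N p hp hmeas' hf'Lp

end
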